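/- arXiv:2507.06115 — 7 statements merged into one kernel-verified Lean document; each statement's English description precedes it below -/
import Mathlib

section
/- Let d ≥ 1, r ≥ 1 and set p_r := 2r / log₂(2 + 2^r). Then for all functions f, g : ℤ^d → ℝ supported in {0,1}^d, one has (∑_{m ∈ ℤ^d} |(f*g)(m)|^r)^{1/r} ≤ (∑_{u ∈ ℤ^d} |f(u)|^{p_r})^{1/p_r} · (∑_{v ∈ ℤ^d} |g(v)|^{p_r})^{1/p_r}. -/
/-!
Induction on `d`. Slicing along the first coordinate, the slices `0, 1, 2` of `f * g` are
`f₀ * g₀`, `f₀ * g₁ + f₁ * g₀` and `f₁ * g₁`; by the induction hypothesis and Minkowski's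
inequality the `r`-th power of `‖f * g‖_r` is at most `(ac)^r + (ae + bc)^r + (be)^r`, where
`a, b` and `c, e` are the `ℓ^p` norms of the slices of `f` and `g`. So everything reduces to the
one-dimensional inequality `(ac)^r + (ae + bc)^r + (be)^r ≤ ((a^p + b^p)(c^p + e^p))^q` with
`p q = r`. It follows from comparing `(s + t)^P - s^P - t^P` with `(2^P - 2)(st)^(P/2)` (below it
for `1 ≤ P ≤ 2`, above it for `P ≥ 2`), used at `P = p` for the middle term and at `P = 2q` for
the outer ones, together with the convexity of `x ↦ x^q`. The exponent `p_r` is exactly the one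
for which `2^(2q) - 2 = 2^r`, which makes the two estimates fit together.
-/

open scoped BigOperators ENNReal

/-- Convolution of two functions on `ℤ^d`. -/
noncomputable def cconv {d : ℕ} (f g : (Fin d → ℤ) → ℝ) : (Fin d → ℤ) → ℝ :=
  fun m => ∑' u : Fin d → ℤ, f u * g (m - u)

/-- A point of `ℤ^d` lies in the hypercube `{0,1}^d`. -/
def InCube {d : ℕ} (x : Fin d → ℤ) : Prop := ∀ i, x i = 0 ∨ x i = 1

/-- A function on `ℤ^d` is supported in `{0,1}^d`. -/
def SupportedInCube {d : ℕ} (f : (Fin d → ℤ) → ℝ) : Prop :=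
  ∀ x : Fin d → ℤ, ¬ InCube x → f x = 0

/-- The `ℓ^s` norm of a function on `ℤ^d` (for `0 < s < ∞`). -/
noncomputable def lnorm {d : ℕ} (s : ℝ) (f : (Fin d → ℤ) → ℝ) : ℝ :=
  (∑' x : Fin d → ℤ, |f x| ^ s) ^ (1 / s)

open Real

/-- Equal to `1` at `t = 1, 2`, hence `≤ 1` on `[1, 2]` and `≥ 1` on `[2, ∞)`: this is the sign
of the derivative of `binomGap`. -/
lemma convexOn_interpolant {z : ℝ} (hz0 : 0 < z) (hz1 : z < 1) :
    ConvexOn ℝ Set.univ fun t : ℝ => (1 - z) * (z + 1) ^ (t - 1) + z ^ t := by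
  have hc : 0 ≤ (1 - z) / (z + 1) := div_nonneg (by linarith) (by linarith)
  refine (((convexOn_rpow_left (by linarith : (0 : ℝ) < z + 1)).smul hc).add
    (convexOn_rpow_left hz0)).congr fun t _ => ?_
  simp only [Pi.add_apply, smul_eq_mul, rpow_sub_one (by linarith : z + 1 ≠ 0)]
  ring

lemma interpolant_one (z : ℝ) : (1 - z) * (z + 1) ^ ((1 : ℝ) - 1) + z ^ (1 : ℝ) = 1 := by
  simp

lemma interpolant_two (z : ℝ) : (1 - z) * (z + 1) ^ ((2 : ℝ) - 1) + z ^ (2 : ℝ) = 1 := by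
  norm_num [rpow_two]
  ring

lemma one_sub_rpow_le_mul_add_one_rpow {z P : ℝ} (hz0 : 0 < z) (hz1 : z < 1) (hP : 2 ≤ P) :
    1 - z ^ P ≤ (1 - z) * (z + 1) ^ (P - 1) := by
  have := (convexOn_interpolant hz0 hz1).le_right_of_left_le'' (Set.mem_univ 1)
    (Set.mem_univ P) one_lt_two hP (by rw [interpolant_one, interpolant_two])
  rw [interpolant_two] at this
  linarith

lemma mul_add_one_rpow_le_one_sub_rpow {z P : ℝ} (hz0 : 0 < z) (hz1 : z < 1) (hP1 : 1 ≤ P)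
    (hP2 : P ≤ 2) : (1 - z) * (z + 1) ^ (P - 1) ≤ 1 - z ^ P := by
  have := (convexOn_interpolant hz0 hz1).le_on_segment (Set.mem_univ 1) (Set.mem_univ 2)
    (by rw [segment_eq_Icc one_le_two]; exact ⟨hP1, hP2⟩)
  rw [interpolant_one, interpolant_two, max_self] at this
  linarith

/-- `((s + t)^P - s^P - t^P) / (st)^(P/2)` as a function of `s / t`. -/
noncomputable def binomGap (P s : ℝ) : ℝ :=
  (s + 1) ^ P * s ^ (-(P / 2)) - s ^ (P / 2) - s ^ (-(P / 2))

lemma hasDerivAt_binomGap (P : ℝ) {s : ℝ} (hs : 0 < s) :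
    HasDerivAt (binomGap P)
      (P / 2 * s ^ (-(P / 2) - 1) * ((1 - s ^ P) - (1 - s) * (s + 1) ^ (P - 1))) s := by
  have hs1 : s + 1 ≠ 0 := by positivity
  have d1 : HasDerivAt (fun x : ℝ => (x + 1) ^ P) (P * (s + 1) ^ (P - 1)) s := by
    simpa using ((hasDerivAt_id s).add_const 1).rpow_const (p := P) (Or.inl hs1)
  have d2 : HasDerivAt (fun x : ℝ => x ^ (-(P / 2))) (-(P / 2) * s ^ (-(P / 2) - 1)) s :=
    hasDerivAt_rpow_const (Or.inl hs.ne')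
  have d3 : HasDerivAt (fun x : ℝ => x ^ (P / 2)) (P / 2 * s ^ (P / 2 - 1)) s :=
    hasDerivAt_rpow_const (Or.inl hs.ne')
  refine (((d1.mul d2).sub d3).sub d2).congr_deriv ?_
  have e1 : s ^ (-(P / 2)) = s ^ (-(P / 2) - 1) * s := by
    rw [← rpow_add_one hs.ne', sub_add_cancel]
  have e2 : (s + 1) ^ P = (s + 1) ^ (P - 1) * (s + 1) := by
    rw [← rpow_add_one hs1, sub_add_cancel]
  have e3 : s ^ (P / 2 - 1) = s ^ (-(P / 2) - 1) * s ^ P := by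
    rw [← rpow_add hs]; ring_nf
  rw [e3, e2, e1]; ring

lemma binomGap_one (P : ℝ) : binomGap P 1 = 2 ^ P - 2 := by
  norm_num [binomGap]
  ring

lemma binomGap_inv (P : ℝ) {s : ℝ} (hs : 0 < s) : binomGap P s⁻¹ = binomGap P s := by
  have h1 : s⁻¹ + 1 = (s + 1) / s := by field_simp; ring
  unfold binomGap
  rw [h1, div_rpow (by positivity) hs.le, inv_rpow hs.le, inv_rpow hs.le, ← rpow_neg hs.le,
    ← rpow_neg hs.le, neg_neg, div_mul_eq_mul_div, mul_div_assoc, ← rpow_sub hs]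
  ring_nf

lemma binomGap_antitoneOn {P : ℝ} (hP : 2 ≤ P) : AntitoneOn (binomGap P) (Set.Ioc 0 1) := by
  refine antitoneOn_of_deriv_nonpos (convex_Ioc 0 1)
    (fun x hx => (hasDerivAt_binomGap P hx.1).continuousAt.continuousWithinAt)
    (fun x hx => ?_) fun x hx => ?_ <;> rw [interior_Ioc] at hx
  · exact (hasDerivAt_binomGap P hx.1).differentiableAt.differentiableWithinAt
  · rw [(hasDerivAt_binomGap P hx.1).deriv]
    have := one_sub_rpow_le_mul_add_one_rpow hx.1 hx.2 hP
    exact mul_nonpos_of_nonneg_of_nonpos (mul_nonneg (by linarith) (rpow_nonneg hx.1.le _))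
      (by linarith)

lemma binomGap_monotoneOn {P : ℝ} (hP1 : 1 ≤ P) (hP2 : P ≤ 2) :
    MonotoneOn (binomGap P) (Set.Ioc 0 1) := by
  refine monotoneOn_of_deriv_nonneg (convex_Ioc 0 1)
    (fun x hx => (hasDerivAt_binomGap P hx.1).continuousAt.continuousWithinAt)
    (fun x hx => ?_) fun x hx => ?_ <;> rw [interior_Ioc] at hx
  · exact (hasDerivAt_binomGap P hx.1).differentiableAt.differentiableWithinAt
  · rw [(hasDerivAt_binomGap P hx.1).deriv]
    have := mul_add_one_rpow_le_one_sub_rpow hx.1 hx.2 hP1 hP2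
    exact mul_nonneg (mul_nonneg (by linarith) (rpow_nonneg hx.1.le _)) (by linarith)

lemma exists_binomGap_eq {P s : ℝ} (hs : 0 < s) :
    ∃ s' ∈ Set.Ioc (0 : ℝ) 1, binomGap P s' = binomGap P s := by
  rcases le_or_gt s 1 with h | h
  · exact ⟨s, ⟨hs, h⟩, rfl⟩
  · exact ⟨s⁻¹, ⟨inv_pos.2 hs, inv_le_one_of_one_le₀ h.le⟩, binomGap_inv P hs⟩

lemma two_pow_sub_two_le_binomGap {P s : ℝ} (hP : 2 ≤ P) (hs : 0 < s) :
    2 ^ P - 2 ≤ binomGap P s := by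
  obtain ⟨s', hs', heq⟩ := exists_binomGap_eq (P := P) hs
  rw [← heq, ← binomGap_one]
  exact binomGap_antitoneOn hP hs' ⟨one_pos, le_rfl⟩ hs'.2

lemma binomGap_le_two_pow_sub_two {P s : ℝ} (hP1 : 1 ≤ P) (hP2 : P ≤ 2) (hs : 0 < s) :
    binomGap P s ≤ 2 ^ P - 2 := by
  obtain ⟨s', hs', heq⟩ := exists_binomGap_eq (P := P) hs
  rw [← heq, ← binomGap_one]
  exact binomGap_monotoneOn hP1 hP2 hs' ⟨one_pos, le_rfl⟩ hs'.2

lemma mul_binomGap_div (P : ℝ) {s t : ℝ} (hs : 0 < s) (ht : 0 < t) :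
    (s * t) ^ (P / 2) * binomGap P (s / t) = (s + t) ^ P - s ^ P - t ^ P := by
  have hsq : ∀ {x : ℝ}, 0 < x → x ^ P = x ^ (P / 2) * x ^ (P / 2) := fun hx => by
    rw [← rpow_add hx]; ring_nf
  have hst : s / t + 1 = (s + t) / t := by field_simp
  unfold binomGap
  rw [hst, div_rpow (by positivity) ht.le, rpow_neg (by positivity), div_rpow hs.le ht.le,
    mul_rpow hs.le ht.le, hsq hs, hsq ht]
  field_simp

lemma two_pow_sub_two_mul_le {P s t : ℝ} (hP : 2 ≤ P) (hs : 0 ≤ s) (ht : 0 ≤ t) :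
    (2 ^ P - 2) * (s * t) ^ (P / 2) ≤ (s + t) ^ P - s ^ P - t ^ P := by
  rcases hs.eq_or_lt with rfl | hs
  · rw [zero_mul, zero_rpow (by linarith), zero_add, zero_rpow (by linarith)]; simp
  rcases ht.eq_or_lt with rfl | ht
  · rw [mul_zero, zero_rpow (by linarith), add_zero, zero_rpow (by linarith)]; simp
  rw [← mul_binomGap_div P hs ht, mul_comm (2 ^ P - 2)]
  exact mul_le_mul_of_nonneg_left (two_pow_sub_two_le_binomGap hP (div_pos hs ht))
    (rpow_nonneg (mul_nonneg hs.le ht.le) _)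

lemma le_two_pow_sub_two_mul {P s t : ℝ} (hP1 : 1 ≤ P) (hP2 : P ≤ 2) (hs : 0 ≤ s)
    (ht : 0 ≤ t) :
    (s + t) ^ P - s ^ P - t ^ P ≤ (2 ^ P - 2) * (s * t) ^ (P / 2) := by
  rcases hs.eq_or_lt with rfl | hs
  · rw [zero_mul, zero_rpow (by linarith), zero_add, zero_rpow (by linarith)]; simp
  rcases ht.eq_or_lt with rfl | ht
  · rw [mul_zero, zero_rpow (by linarith), add_zero, zero_rpow (by linarith)]; simp
  rw [← mul_binomGap_div P hs ht, mul_comm (2 ^ P - 2)]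
  exact mul_le_mul_of_nonneg_left (binomGap_le_two_pow_sub_two hP1 hP2 (div_pos hs ht))
    (rpow_nonneg (mul_nonneg hs.le ht.le) _)

-- `x + δ` and `y` are convex combinations of `x` and `y + δ` with swapped weights.
lemma ConvexOn.map_add_sub_map_le {s : Set ℝ} {f : ℝ → ℝ} (hf : ConvexOn ℝ s f) {x y δ : ℝ}
    (hx : x ∈ s) (hyδ : y + δ ∈ s) (hxy : x ≤ y) (hδ : 0 ≤ δ) :
    f (x + δ) - f x ≤ f (y + δ) - f y := by
  rcases (by linarith : 0 ≤ y - x + δ).eq_or_lt with h | h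
  · obtain ⟨rfl, rfl⟩ : y = x ∧ δ = 0 := by constructor <;> linarith
    simp
  set l := (y - x) / (y - x + δ)
  have hl0 : 0 ≤ l := div_nonneg (by linarith) h.le
  have hl1 : 0 ≤ 1 - l := by rw [sub_nonneg, div_le_one h]; linarith
  have h1 := hf.2 hx hyδ hl0 hl1 (by ring)
  have h2 := hf.2 hx hyδ hl1 hl0 (by ring)
  have e1 : l • x + (1 - l) • (y + δ) = x + δ := by
    simp only [smul_eq_mul, l]; field_simp; ring
  have e2 : (1 - l) • x + l • (y + δ) = y := by
    simp only [smul_eq_mul, l]; field_simp; ring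
  rw [e1] at h1
  rw [e2] at h2
  simp only [smul_eq_mul] at h1 h2
  linarith

/-- The two-point inequality in the variables `u² = (ac)^p`, `v² = (be)^p`, `w² = (ae)^p`,
`z² = (bc)^p`. -/
lemma two_point_of_mul_eq {p q r : ℝ} (hp2 : p ≤ 2) (hq1 : 1 ≤ q) (hpq : p * q = r)
    (hkey : (2 : ℝ) ^ (2 * q) = 2 + 2 ^ r) {u v w z : ℝ} (hu : 0 ≤ u) (hv : 0 ≤ v)
    (huv : u * v = w * z) :
    (u ^ 2) ^ q + (w ^ 2 + z ^ 2 + (2 ^ p - 2) * (u * v)) ^ q + (v ^ 2) ^ q ≤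
      (u ^ 2 + v ^ 2 + w ^ 2 + z ^ 2) ^ q := by
  have h4p : (2 : ℝ) ^ p ≤ 4 :=
    (rpow_le_rpow_of_exponent_le one_le_two hp2).trans_eq (by norm_num)
  have houter : (u ^ 2) ^ q + (v ^ 2) ^ q + 2 ^ r * (u * v) ^ q ≤
      (u ^ 2 + v ^ 2 + 2 * (u * v)) ^ q := by
    have := two_pow_sub_two_mul_le (P := 2 * q) (by linarith) hu hv
    rw [show 2 * q / 2 = q by ring, hkey, rpow_mul hu, rpow_mul hv, rpow_mul (by positivity)]
      at this
    simp only [rpow_two] at this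
    rw [show (u + v) ^ 2 = u ^ 2 + v ^ 2 + 2 * (u * v) by ring] at this
    linarith
  -- the increment of `x ↦ x^q` from `2^p uv` to `u² + v² + 2uv` is larger on a larger base
  have hshift := (convexOn_rpow hq1).map_add_sub_map_le (x := 2 ^ p * (u * v))
    (y := w ^ 2 + z ^ 2 + (2 ^ p - 2) * (u * v))
    (δ := u ^ 2 + v ^ 2 + 2 * (u * v) - 2 ^ p * (u * v))
    (Set.mem_Ici.2 (by positivity)) (Set.mem_Ici.2 (by ring_nf; positivity))
    (by nlinarith [sq_nonneg (w - z)])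
    (by nlinarith [sq_nonneg (u - v), mul_le_mul_of_nonneg_right h4p (mul_nonneg hu hv)])
  rw [show 2 ^ p * (u * v) + (u ^ 2 + v ^ 2 + 2 * (u * v) - 2 ^ p * (u * v))
      = u ^ 2 + v ^ 2 + 2 * (u * v) by ring,
    show w ^ 2 + z ^ 2 + (2 ^ p - 2) * (u * v) + (u ^ 2 + v ^ 2 + 2 * (u * v) - 2 ^ p * (u * v))
      = u ^ 2 + v ^ 2 + w ^ 2 + z ^ 2 by ring,
    mul_rpow (by positivity) (by positivity), ← rpow_mul zero_le_two, hpq] at hshift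
  linarith

lemma two_point {p q r : ℝ} (hp1 : 1 ≤ p) (hp2 : p ≤ 2) (hq1 : 1 ≤ q) (hpq : p * q = r)
    (hkey : (2 : ℝ) ^ (2 * q) = 2 + 2 ^ r) {a b c e : ℝ}
    (ha : 0 ≤ a) (hb : 0 ≤ b) (hc : 0 ≤ c) (he : 0 ≤ e) :
    (a * c) ^ r + (a * e + b * c) ^ r + (b * e) ^ r ≤ ((a ^ p + b ^ p) * (c ^ p + e ^ p)) ^ q := by
  have hsq : ∀ {x : ℝ}, 0 ≤ x → (x ^ (p / 2)) ^ 2 = x ^ p := fun hx => by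
    rw [← rpow_natCast, ← rpow_mul hx]; norm_num
  have hpow : ∀ {x : ℝ}, 0 ≤ x → x ^ r = ((x ^ (p / 2)) ^ 2) ^ q := fun hx => by
    rw [hsq hx, ← rpow_mul hx, hpq]
  set u := (a * c) ^ (p / 2)
  set v := (b * e) ^ (p / 2)
  set w := (a * e) ^ (p / 2)
  set z := (b * c) ^ (p / 2)
  have huv : u * v = w * z := by
    simp only [u, v, w, z]
    rw [← mul_rpow (by positivity) (by positivity), ← mul_rpow (by positivity) (by positivity)]
    ring_nf
  have hmid : (a * e + b * c) ^ r ≤ (w ^ 2 + z ^ 2 + (2 ^ p - 2) * (u * v)) ^ q := by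
    have := le_two_pow_sub_two_mul hp1 hp2 (mul_nonneg ha he) (mul_nonneg hb hc)
    rw [mul_rpow (mul_nonneg ha he) (mul_nonneg hb hc)] at this
    rw [← hpq, rpow_mul (by positivity), huv, hsq (mul_nonneg ha he), hsq (mul_nonneg hb hc)]
    exact rpow_le_rpow (rpow_nonneg (by positivity) _) (by linarith) (by linarith)
  have hrhs : (a ^ p + b ^ p) * (c ^ p + e ^ p) = u ^ 2 + v ^ 2 + w ^ 2 + z ^ 2 := by
    rw [hsq (mul_nonneg ha hc), hsq (mul_nonneg hb he), hsq (mul_nonneg ha he),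
      hsq (mul_nonneg hb hc), mul_rpow ha hc, mul_rpow hb he, mul_rpow ha he, mul_rpow hb hc]
    ring
  rw [hpow (mul_nonneg ha hc), hpow (mul_nonneg hb he), hrhs]
  linarith [two_point_of_mul_eq hp2 hq1 hpq hkey (rpow_nonneg (mul_nonneg ha hc) _)
    (rpow_nonneg (mul_nonneg hb he) _) huv]

abbrev grid (d : ℕ) (S : Finset ℤ) : Finset (Fin d → ℤ) := Fintype.piFinset fun _ => S

lemma sum_grid_succ {d : ℕ} (S : Finset ℤ) (φ : (Fin (d + 1) → ℤ) → ℝ) :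
    ∑ x ∈ grid (d + 1) S, φ x = ∑ j ∈ S, ∑ y ∈ grid d S, φ (Fin.cons j y) := by
  have := Finset.filter_piFinset_eq_map_consEquiv (fun _ : Fin (d + 1) => S) (fun _ => True)
  simp only [Finset.filter_true] at this
  rw [grid, this, Finset.sum_map, Finset.sum_product]
  rfl

lemma cons_sub_cons {d : ℕ} (k j : ℤ) (m u : Fin d → ℤ) :
    (Fin.cons k m : Fin (d + 1) → ℤ) - Fin.cons j u = Fin.cons (k - j) (m - u) :=
  Matrix.cons_sub_cons k m j u

noncomputable def gridNorm {d : ℕ} (S : Finset ℤ) (s : ℝ) (f : (Fin d → ℤ) → ℝ) : ℝ :=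
  (∑ x ∈ grid d S, |f x| ^ s) ^ (1 / s)

noncomputable def cubeConv {d : ℕ} (f g : (Fin d → ℤ) → ℝ) (m : Fin d → ℤ) : ℝ :=
  ∑ u ∈ grid d {0, 1}, f u * g (m - u)

def slice {d : ℕ} (f : (Fin (d + 1) → ℤ) → ℝ) (j : ℤ) : (Fin d → ℤ) → ℝ :=
  fun y => f (Fin.cons j y)

section GridNorm

variable {d : ℕ} {S : Finset ℤ} {s : ℝ}

lemma gridNorm_nonneg (f : (Fin d → ℤ) → ℝ) : 0 ≤ gridNorm S s f :=
  rpow_nonneg (Finset.sum_nonneg fun _ _ => rpow_nonneg (abs_nonneg _) _) _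

lemma gridNorm_rpow (hs : s ≠ 0) (f : (Fin d → ℤ) → ℝ) :
    gridNorm S s f ^ s = ∑ x ∈ grid d S, |f x| ^ s := by
  rw [gridNorm, ← rpow_mul (Finset.sum_nonneg fun _ _ => rpow_nonneg (abs_nonneg _) _),
    one_div_mul_cancel hs, rpow_one]

lemma gridNorm_succ_rpow (hs : s ≠ 0) (f : (Fin (d + 1) → ℤ) → ℝ) :
    gridNorm S s f ^ s = ∑ j ∈ S, gridNorm S s (slice f j) ^ s := by
  simp only [gridNorm_rpow hs, sum_grid_succ, slice]

lemma gridNorm_add_le (hs : 1 ≤ s) (f g : (Fin d → ℤ) → ℝ) :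
    gridNorm S s (f + g) ≤ gridNorm S s f + gridNorm S s g :=
  Real.Lp_add_le _ f g hs

lemma gridNorm_zero_dim (hs : s ≠ 0) (f : (Fin 0 → ℤ) → ℝ) (x : Fin 0 → ℤ) :
    gridNorm S s f = |f x| := by
  rw [gridNorm, grid, Fintype.piFinset_of_isEmpty, Fintype.sum_subsingleton _ x,
    ← rpow_mul (abs_nonneg _), mul_one_div_cancel hs, rpow_one]

end GridNorm

lemma cubeConv_zero_dim (f g : (Fin 0 → ℤ) → ℝ) (x : Fin 0 → ℤ) :
    cubeConv f g x = f x * g x := by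
  rw [cubeConv, grid, Fintype.piFinset_of_isEmpty, Fintype.sum_subsingleton _ x, sub_self,
    Subsingleton.elim 0 x]

lemma slice_cubeConv {d : ℕ} (f g : (Fin (d + 1) → ℤ) → ℝ) (k : ℤ) :
    slice (cubeConv f g) k =
      cubeConv (slice f 0) (slice g k) + cubeConv (slice f 1) (slice g (k - 1)) := by
  funext m
  rw [slice, cubeConv, sum_grid_succ, Finset.sum_pair zero_ne_one]
  simp only [Pi.add_apply, cubeConv, slice, cons_sub_cons, sub_zero]

lemma slice_eq_zero_of_notMem {d : ℕ} {g : (Fin (d + 1) → ℤ) → ℝ} {S : Finset ℤ}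
    (hg : ∀ x ∉ grid (d + 1) S, g x = 0) {j : ℤ} (hj : j ∉ S) : slice g j = 0 :=
  funext fun _ => hg _ fun h => hj (Fintype.mem_piFinset.1 h 0)

lemma slice_eq_zero_of_notMem_grid {d : ℕ} {g : (Fin (d + 1) → ℤ) → ℝ} {S : Finset ℤ}
    (hg : ∀ x ∉ grid (d + 1) S, g x = 0) (j : ℤ) : ∀ y ∉ grid d S, slice g j y = 0 :=
  fun _ hy => hg _ fun h => hy (Fintype.mem_piFinset.2 fun i => by
    simpa using Fintype.mem_piFinset.1 h i.succ)

lemma cubeConv_zero_right {d : ℕ} (f : (Fin d → ℤ) → ℝ) : cubeConv f 0 = 0 := by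
  funext m
  simp [cubeConv]

theorem gridNorm_cubeConv_le {p q r : ℝ} (hp1 : 1 ≤ p) (hp2 : p ≤ 2) (hq1 : 1 ≤ q)
    (hpq : p * q = r) (hkey : (2 : ℝ) ^ (2 * q) = 2 + 2 ^ r) (d : ℕ) (f g : (Fin d → ℤ) → ℝ)
    (hg : ∀ x ∉ grid d {0, 1}, g x = 0) :
    gridNorm {0, 1, 2} r (cubeConv f g) ≤ gridNorm {0, 1} p f * gridNorm {0, 1} p g := by
  have hr : 1 ≤ r := by nlinarith
  induction d with
  | zero =>
    rw [gridNorm_zero_dim (by linarith) _ 0, gridNorm_zero_dim (by linarith) _ 0,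
      gridNorm_zero_dim (by linarith) _ 0, cubeConv_zero_dim, abs_mul]
  | succ d ih =>
    have ih' (j k : ℤ) := ih (slice f j) (slice g k) (slice_eq_zero_of_notMem_grid hg k)
    have hg_neg : slice g (-1) = 0 := slice_eq_zero_of_notMem hg (by decide)
    have hg_two : slice g 2 = 0 := slice_eq_zero_of_notMem hg (by decide)
    have hr0 : r ≠ 0 := by linarith
    have hp0 : p ≠ 0 := by linarith
    set a := gridNorm {0, 1} p (slice f 0)
    set b := gridNorm {0, 1} p (slice f 1)
    set c := gridNorm {0, 1} p (slice g 0)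
    set e := gridNorm {0, 1} p (slice g 1)
    have hlhs : gridNorm {0, 1, 2} r (cubeConv f g) ^ r ≤
        (a * c) ^ r + (a * e + b * c) ^ r + (b * e) ^ r := by
      rw [gridNorm_succ_rpow hr0, Finset.sum_insert (by decide), Finset.sum_pair (by decide),
        slice_cubeConv, slice_cubeConv, slice_cubeConv, zero_sub, sub_self, hg_neg, hg_two,
        show (2 : ℤ) - 1 = 1 by norm_num, cubeConv_zero_right, cubeConv_zero_right, add_zero,
        zero_add, ← add_assoc]
      gcongr
      · exact gridNorm_nonneg _
      · exact ih' 0 0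
      · exact gridNorm_nonneg _
      · exact (gridNorm_add_le hr _ _).trans (add_le_add (ih' 0 1) (ih' 1 0))
      · exact gridNorm_nonneg _
      · exact ih' 1 1
    have hrhs : (gridNorm {0, 1} p f * gridNorm {0, 1} p g) ^ r =
        ((a ^ p + b ^ p) * (c ^ p + e ^ p)) ^ q := by
      rw [← hpq, rpow_mul (mul_nonneg (gridNorm_nonneg _) (gridNorm_nonneg _)),
        mul_rpow (gridNorm_nonneg _) (gridNorm_nonneg _), gridNorm_succ_rpow hp0,
        gridNorm_succ_rpow hp0, Finset.sum_pair zero_ne_one, Finset.sum_pair zero_ne_one]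
    rw [← rpow_le_rpow_iff (gridNorm_nonneg _)
      (mul_nonneg (gridNorm_nonneg _) (gridNorm_nonneg _)) (by linarith : 0 < r), hrhs]
    exact hlhs.trans (two_point hp1 hp2 hq1 hpq hkey (gridNorm_nonneg _) (gridNorm_nonneg _)
      (gridNorm_nonneg _) (gridNorm_nonneg _))

lemma supportedInCube_iff {d : ℕ} {f : (Fin d → ℤ) → ℝ} :
    SupportedInCube f ↔ ∀ x ∉ grid d {0, 1}, f x = 0 := by
  simp [SupportedInCube, InCube]

lemma lnorm_eq_gridNorm {d : ℕ} {S : Finset ℤ} {s : ℝ} (hs : s ≠ 0) {f : (Fin d → ℤ) → ℝ}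
    (hf : ∀ x ∉ grid d S, f x = 0) : lnorm s f = gridNorm S s f := by
  rw [lnorm, gridNorm, tsum_eq_sum fun x hx => by rw [hf x hx, abs_zero, zero_rpow hs]]

lemma cconv_eq_cubeConv {d : ℕ} {f : (Fin d → ℤ) → ℝ} (hf : ∀ x ∉ grid d {0, 1}, f x = 0)
    (g : (Fin d → ℤ) → ℝ) : cconv f g = cubeConv f g :=
  funext fun _ => tsum_eq_sum fun u hu => by rw [hf u hu, zero_mul]

lemma cubeConv_eq_zero_of_notMem {d : ℕ} (f : (Fin d → ℤ) → ℝ) {g : (Fin d → ℤ) → ℝ}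
    (hg : ∀ x ∉ grid d {0, 1}, g x = 0) : ∀ m ∉ grid d {0, 1, 2}, cubeConv f g m = 0 := by
  intro m hm
  refine Finset.sum_eq_zero fun u hu => ?_
  rw [hg, mul_zero]
  simp only [Fintype.mem_piFinset, Finset.mem_insert, Finset.mem_singleton, not_forall] at hm hu ⊢
  obtain ⟨i, hi⟩ := hm
  exact ⟨i, by have := hu i; simp only [Pi.sub_apply]; omega⟩

lemma logb_two_add_two_rpow_bounds {r : ℝ} (hr : 1 ≤ r) :
    2 ≤ logb 2 (2 + 2 ^ r) ∧ r ≤ logb 2 (2 + 2 ^ r) ∧ logb 2 (2 + 2 ^ r) ≤ 2 * r := by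
  have h2r : (2 : ℝ) ≤ 2 ^ r := by simpa using rpow_le_rpow_of_exponent_le one_le_two hr
  refine ⟨?_, ?_, ?_⟩
  · rw [le_logb_iff_rpow_le one_lt_two (by positivity)]; norm_num; linarith
  · rw [le_logb_iff_rpow_le one_lt_two (by positivity)]; linarith
  · rw [logb_le_iff_le_rpow one_lt_two (by positivity), mul_comm, rpow_mul zero_le_two, rpow_two]
    nlinarith

theorem young_hypercube_diagonal_general (d : ℕ) (r : ℝ) (hr : 1 ≤ r)
    (f g : (Fin d → ℤ) → ℝ) (hf : SupportedInCube f) (hg : SupportedInCube g) :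
    lnorm r (cconv f g) ≤
      lnorm (2 * r / Real.logb 2 (2 + 2 ^ r)) f *
        lnorm (2 * r / Real.logb 2 (2 + 2 ^ r)) g := by
  obtain ⟨hΛ2, hrΛ, hΛr⟩ := logb_two_add_two_rpow_bounds hr
  set Λ := logb 2 (2 + 2 ^ r)
  have hΛ0 : 0 < Λ := by linarith
  have hp1 : 1 ≤ 2 * r / Λ := by rw [le_div_iff₀ hΛ0]; linarith
  have hp2 : 2 * r / Λ ≤ 2 := by rw [div_le_iff₀ hΛ0]; linarith
  have hpq : 2 * r / Λ * (Λ / 2) = r := by field_simp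
  have hkey : (2 : ℝ) ^ (2 * (Λ / 2)) = 2 + 2 ^ r := by
    rw [mul_div_cancel₀ _ two_ne_zero, rpow_logb two_pos (by norm_num) (by positivity)]
  rw [supportedInCube_iff] at hf hg
  rw [cconv_eq_cubeConv hf, lnorm_eq_gridNorm (by linarith) (cubeConv_eq_zero_of_notMem f hg),
    lnorm_eq_gridNorm (by positivity) hf, lnorm_eq_gridNorm (by positivity) hg]
  exact gridNorm_cubeConv_le hp1 hp2 (by linarith) hpq hkey d f g hg

theorem young_hypercube_diagonal (d : ℕ) (hd : 1 ≤ d) (r : ℝ) (hr : 1 ≤ r)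
    (f g : (Fin d → ℤ) → ℝ) (hf : SupportedInCube f) (hg : SupportedInCube g) :
    lnorm r (cconv f g) ≤
      lnorm (2 * r / Real.logb 2 (2 + 2 ^ r)) f *
        lnorm (2 * r / Real.logb 2 (2 + 2 ^ r)) g :=
  young_hypercube_diagonal_general d r hr f g hf hg
end

section
/- Let r > 1 and let 1 ≤ p, q ≤ ∞ satisfy 1/p + 1/q = log₂(2^r + 2)/r. If the inequality ‖f*g‖_{ℓ^r(ℤ^d)} ≤ ‖f‖_{ℓ^p(ℤ^d)} ‖g‖_{ℓ^q(ℤ^d)} holds for every d ≥ 1 and all f, g : ℤ^d → ℝ supported in {0,1}^d, then (r + 2^{r-1})/(1 + 2^{r-1}) ≤ p, q ≤ 1 / ( log₂(2^r + 2)/r − (1 + 2^{r-1})/(r + 2^{r-1}) ). -/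
open scoped BigOperators ENNReal

/-- The `ℓ^s` norm for an extended exponent `s ∈ (0,∞]`:
for `s = ∞` it is the sup norm, otherwise the usual `ℓ^s` norm. -/
noncomputable def lnormE {d : ℕ} (s : ℝ≥0∞) (f : (Fin d → ℤ) → ℝ) : ℝ :=
  if s = ∞ then ⨆ x : Fin d → ℤ, |f x|
  else (∑' x : Fin d → ℤ, |f x| ^ s.toReal) ^ (1 / s.toReal)

/-!
Test the inequality in dimension one with `f = (1, 1)` and `g = (1, t)`, and with the roles of
`f` and `g` swapped: `(1 + (1 + t)^r + t^r)^(1/r) ≤ 2^(1/p) (1 + t^q)^(1/q)` for all `t > 0`, with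
equality at `t = 1` precisely because `(p, q)` lies on the critical line. So `t = 1` minimises
`log ((1 + t^q)^(1/q) / (1 + (1 + t)^r + t^r)^(1/r))`, and the second derivative there, which is
`(q (1 + 2^(r-1)) - (r + 2^(r-1))) / (4 (1 + 2^(r-1)))`, must be nonnegative. This gives the lower
bound for `q` (and for `p`); the upper bounds follow from `1/p + 1/q = log₂(2^r + 2)/r`.
-/

open Filter Topology

lemma cconv_comm {d : ℕ} (f g : (Fin d → ℤ) → ℝ) : cconv f g = cconv g f := by
  funext m
  refine ((Equiv.subLeft m).tsum_eq _).symm.trans (tsum_congr fun u => ?_)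
  simp [mul_comm]

lemma cconv_comp_funUnique (φ ψ : ℤ → ℝ) :
    cconv (φ ∘ Equiv.funUnique (Fin 1) ℤ) (ψ ∘ Equiv.funUnique (Fin 1) ℤ) =
      (fun n => ∑' k, φ k * ψ (n - k)) ∘ Equiv.funUnique (Fin 1) ℤ := by
  funext m
  exact (Equiv.funUnique (Fin 1) ℤ).tsum_eq fun k => φ k * ψ (m 0 - k)

lemma lnorm_comp_funUnique (s : ℝ) (φ : ℤ → ℝ) :
    lnorm s (φ ∘ Equiv.funUnique (Fin 1) ℤ) = (∑' n, |φ n| ^ s) ^ (1 / s) := by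
  unfold lnorm
  exact congrArg (· ^ (1 / s)) ((Equiv.funUnique (Fin 1) ℤ).tsum_eq fun n => |φ n| ^ s)

lemma lnormE_comp_funUnique {s : ℝ≥0∞} (hs : s ≠ ∞) (φ : ℤ → ℝ) :
    lnormE s (φ ∘ Equiv.funUnique (Fin 1) ℤ) = (∑' n, |φ n| ^ s.toReal) ^ (1 / s.toReal) := by
  rw [lnormE, if_neg hs]
  exact congrArg (· ^ (1 / s.toReal))
    ((Equiv.funUnique (Fin 1) ℤ).tsum_eq fun n => |φ n| ^ s.toReal)

def twoPoint (a b : ℝ) (n : ℤ) : ℝ := if n = 0 then a else if n = 1 then b else 0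

lemma twoPoint_eq_zero {a b : ℝ} {n : ℤ} (h₀ : n ≠ 0) (h₁ : n ≠ 1) : twoPoint a b n = 0 := by
  simp [twoPoint, h₀, h₁]

lemma supportedInCube_twoPoint (a b : ℝ) :
    SupportedInCube (twoPoint a b ∘ Equiv.funUnique (Fin 1) ℤ) := by
  intro x hx
  have hx₀ : ¬(x 0 = 0 ∨ x 0 = 1) := fun h => hx fun i => Fin.fin_one_eq_zero i ▸ h
  rw [not_or] at hx₀
  exact twoPoint_eq_zero hx₀.1 hx₀.2

lemma tsum_twoPoint_mul (a b : ℝ) (ψ : ℤ → ℝ) (n : ℤ) :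
    ∑' k, twoPoint a b k * ψ (n - k) = a * ψ n + b * ψ (n - 1) := by
  rw [tsum_eq_sum (s := {0, 1}) fun k hk => by
    simp only [Finset.mem_insert, Finset.mem_singleton, not_or] at hk
    rw [twoPoint_eq_zero hk.1 hk.2, zero_mul]]
  simp [twoPoint]

lemma tsum_abs_rpow_twoPoint {s : ℝ} (hs : s ≠ 0) (a b : ℝ) :
    ∑' n, |twoPoint a b n| ^ s = |a| ^ s + |b| ^ s := by
  rw [tsum_eq_sum (s := {0, 1}) fun n hn => by
    simp only [Finset.mem_insert, Finset.mem_singleton, not_or] at hn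
    rw [twoPoint_eq_zero hn.1 hn.2, abs_zero, Real.zero_rpow hs]]
  simp [twoPoint]

lemma lnormE_twoPoint {s : ℝ≥0∞} (hs₀ : s ≠ 0) (hs : s ≠ ∞) (a b : ℝ) :
    lnormE s (twoPoint a b ∘ Equiv.funUnique (Fin 1) ℤ) =
      (|a| ^ s.toReal + |b| ^ s.toReal) ^ (1 / s.toReal) := by
  rw [lnormE_comp_funUnique hs, tsum_abs_rpow_twoPoint (ENNReal.toReal_ne_zero.2 ⟨hs₀, hs⟩)]

lemma lnorm_cconv_twoPoint {s : ℝ} (hs : s ≠ 0) (a b c d : ℝ) :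
    lnorm s (cconv (twoPoint a b ∘ Equiv.funUnique (Fin 1) ℤ)
        (twoPoint c d ∘ Equiv.funUnique (Fin 1) ℤ)) =
      (|a * c| ^ s + |a * d + b * c| ^ s + |b * d| ^ s) ^ (1 / s) := by
  simp only [cconv_comp_funUnique, lnorm_comp_funUnique, tsum_twoPoint_mul]
  rw [tsum_eq_sum (s := {0, 1, 2}) fun n hn => by
    simp only [Finset.mem_insert, Finset.mem_singleton, not_or] at hn
    rw [twoPoint_eq_zero hn.1 hn.2.1, twoPoint_eq_zero (by omega) (by omega)]
    simp [Real.zero_rpow hs]]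
  simp [twoPoint, add_assoc]

lemma twoPoint_rpow_le_of_young {r : ℝ} (hr : r ≠ 0) {p q : ℝ≥0∞} (hp₀ : p ≠ 0) (hp : p ≠ ∞)
    (hq₀ : q ≠ 0) (hq : q ≠ ∞)
    (h : ∀ f g : (Fin 1 → ℤ) → ℝ, SupportedInCube f → SupportedInCube g →
      lnorm r (cconv f g) ≤ lnormE p f * lnormE q g) {t : ℝ} (ht : 0 ≤ t) :
    (1 + (1 + t) ^ r + t ^ r) ^ (1 / r) ≤
      2 ^ (1 / p.toReal) * (1 + t ^ q.toReal) ^ (1 / q.toReal) := by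
  have := h _ _ (supportedInCube_twoPoint 1 1) (supportedInCube_twoPoint 1 t)
  rw [lnorm_cconv_twoPoint hr, lnormE_twoPoint hp₀ hp, lnormE_twoPoint hq₀ hq] at this
  simpa [abs_of_nonneg ht, abs_of_nonneg (by linarith : 0 ≤ 1 + t), add_comm t,
    one_add_one_eq_two] using this

/-- `log (‖(1, t)‖_q / ‖(1, 1) * (1, t)‖_r)` for functions on `ℤ`. -/
noncomputable def logRatio (r q t : ℝ) : ℝ :=
  q⁻¹ * Real.log (1 + t ^ q) - r⁻¹ * Real.log (1 + (1 + t) ^ r + t ^ r)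

noncomputable def logRatioDeriv (r q t : ℝ) : ℝ :=
  t ^ (q - 1) / (1 + t ^ q) - ((1 + t) ^ (r - 1) + t ^ (r - 1)) / (1 + (1 + t) ^ r + t ^ r)

lemma logRatio_one_le {r α β : ℝ}
    (hc : 1 / α + 1 / β = Real.logb 2 (2 ^ r + 2) / r)
    (h : ∀ t : ℝ, 0 < t →
      (1 + (1 + t) ^ r + t ^ r) ^ (1 / r) ≤ 2 ^ (1 / α) * (1 + t ^ β) ^ (1 / β))
    {t : ℝ} (ht : 0 < t) : logRatio r β 1 ≤ logRatio r β t := by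
  have hlog := Real.log_le_log (by positivity) (h t ht)
  rw [Real.log_rpow (by positivity), Real.log_mul (by positivity) (by positivity),
    Real.log_rpow two_pos, Real.log_rpow (by positivity)] at hlog
  have hc' : α⁻¹ * Real.log 2 + β⁻¹ * Real.log 2 = r⁻¹ * Real.log (2 ^ r + 2) := by
    rw [← add_mul, ← one_div, ← one_div, hc, Real.logb]
    field_simp [Real.log_pos one_lt_two]
  simp only [logRatio, Real.one_rpow, one_add_one_eq_two, one_div] at hlog ⊢
  rw [show (1 : ℝ) + 2 ^ r + 1 = 2 ^ r + 2 by ring]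
  linarith

lemma hasDerivAt_logRatio {r q t : ℝ} (hr : r ≠ 0) (hq : q ≠ 0) (ht : 0 < t) :
    HasDerivAt (logRatio r q) (logRatioDeriv r q t) t := by
  have hA : HasDerivAt (fun t => 1 + t ^ q) (q * t ^ (q - 1)) t :=
    (Real.hasDerivAt_rpow_const (Or.inl ht.ne')).const_add 1
  have hB : HasDerivAt (fun t => 1 + (1 + t) ^ r + t ^ r)
      (1 * r * (1 + t) ^ (r - 1) + r * t ^ (r - 1)) t :=
    ((((hasDerivAt_id t).const_add 1).rpow_const (Or.inl (by simp; linarith))).const_add 1).add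
      (Real.hasDerivAt_rpow_const (Or.inl ht.ne'))
  refine (((hA.log (by positivity)).const_mul q⁻¹).sub
    ((hB.log (by positivity)).const_mul r⁻¹)).congr_deriv ?_
  simp only [logRatioDeriv]
  field_simp

lemma hasDerivAt_logRatioDeriv_one (r q : ℝ) :
    HasDerivAt (logRatioDeriv r q)
      ((q * (1 + 2 ^ (r - 1)) - (r + 2 ^ (r - 1))) / (4 * (1 + 2 ^ (r - 1)))) 1 := by
  have hpow (s : ℝ) : HasDerivAt (fun t : ℝ => t ^ s) (s * 1 ^ (s - 1)) 1 :=
    Real.hasDerivAt_rpow_const (Or.inl one_ne_zero)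
  have hshift (s : ℝ) : HasDerivAt (fun t : ℝ => (1 + t) ^ s) (1 * s * (1 + 1) ^ (s - 1)) 1 :=
    ((hasDerivAt_id 1).const_add 1).rpow_const (Or.inl (by norm_num))
  have hden₁ : (1 : ℝ) + 1 ^ q ≠ 0 := by simp
  have hden₂ : (1 : ℝ) + (1 + 1) ^ r + 1 ^ r ≠ 0 := by positivity
  refine (((hpow (q - 1)).div ((hpow q).const_add 1) hden₁).sub
    (((hshift (r - 1)).add (hpow (r - 1))).div (((hshift r).const_add 1).add (hpow r))
      hden₂)).congr_deriv ?_
  have h2r : (2 : ℝ) ^ r = 2 ^ (r - 1) * 2 := by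
    rw [← Real.rpow_add_one two_ne_zero]; ring_nf
  simp only [Pi.add_apply, Real.one_rpow, one_add_one_eq_two]
  rw [Real.rpow_sub_one two_ne_zero (r - 1), h2r]
  field_simp
  ring

theorem IsLocalMin.nonneg_of_hasDerivAt_hasDerivAt {f f' : ℝ → ℝ} {x₀ f'' : ℝ}
    (hmin : IsLocalMin f x₀) (hf : ∀ᶠ x in 𝓝 x₀, HasDerivAt f (f' x) x)
    (hf' : HasDerivAt f' f'' x₀) : 0 ≤ f'' := by
  by_contra! hneg
  have hderiv : deriv f =ᶠ[𝓝 x₀] f' := hf.mono fun x hx => hx.deriv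
  have hmax : IsLocalMax f x₀ :=
    isLocalMax_of_deriv_deriv_neg (by rwa [hderiv.deriv_eq, hf'.deriv])
      (by rw [hderiv.eq_of_nhds]; exact hmin.hasDerivAt_eq_zero hf.self_of_nhds)
      hf.self_of_nhds.continuousAt
  have hconst : f =ᶠ[𝓝 x₀] fun _ => f x₀ :=
    (hmin.and hmax).mono fun x hx => le_antisymm hx.2 hx.1
  have hzero : f' =ᶠ[𝓝 x₀] fun _ => 0 := by
    filter_upwards [hf, hconst.eventuallyEq_nhds] with x hx hc
    exact hx.unique ((hasDerivAt_const x (f x₀)).congr_of_eventuallyEq hc)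
  exact hneg.ne ((hf'.congr_of_eventuallyEq hzero.symm).unique (hasDerivAt_const x₀ 0))

lemma le_of_isLocalMin_logRatio {r q : ℝ} (hr : r ≠ 0) (hq : q ≠ 0)
    (hmin : IsLocalMin (logRatio r q) 1) : (r + 2 ^ (r - 1)) / (1 + 2 ^ (r - 1)) ≤ q := by
  have hnonneg := hmin.nonneg_of_hasDerivAt_hasDerivAt
    (by filter_upwards [Ioi_mem_nhds one_pos] with t ht using hasDerivAt_logRatio hr hq ht)
    (hasDerivAt_logRatioDeriv_one r q)
  have hN := (le_div_iff₀ (by positivity)).1 hnonneg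
  rw [div_le_iff₀ (by positivity)]
  linarith

lemma le_of_forall_twoPoint_rpow_le {r α β : ℝ} (hr : r ≠ 0) (hβ : β ≠ 0)
    (hc : 1 / α + 1 / β = Real.logb 2 (2 ^ r + 2) / r)
    (h : ∀ t : ℝ, 0 < t →
      (1 + (1 + t) ^ r + t ^ r) ^ (1 / r) ≤ 2 ^ (1 / α) * (1 + t ^ β) ^ (1 / β)) :
    (r + 2 ^ (r - 1)) / (1 + 2 ^ (r - 1)) ≤ β :=
  le_of_isLocalMin_logRatio hr hβ <| by
    filter_upwards [Ioi_mem_nhds one_pos] with t ht using logRatio_one_le hc h ht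

lemma le_one_div_sub_one_div {x y c L : ℝ} (hL : 0 < L) (hLy : L ≤ y)
    (hxy : 1 / x + 1 / y = c) (hLc : 1 / L < c) : x ≤ 1 / (c - 1 / L) := by
  have hy : 1 / y ≤ 1 / L := one_div_le_one_div_of_le hL hLy
  calc x = 1 / (1 / x) := (one_div_one_div x).symm
    _ ≤ 1 / (c - 1 / L) := one_div_le_one_div_of_le (by linarith) (by linarith)

lemma one_lt_logb_two_rpow_add_two_div {r : ℝ} (hr : 0 < r) : 1 < Real.logb 2 (2 ^ r + 2) / r :=
  (one_lt_div hr).2 <| (Real.lt_logb_iff_rpow_lt one_lt_two (by positivity)).2 (by linarith)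

lemma le_one_div_logb_sub {r x y : ℝ} (hr : 1 ≤ r)
    (hxy : 1 / x + 1 / y = Real.logb 2 (2 ^ r + 2) / r)
    (hy : (r + 2 ^ (r - 1)) / (1 + 2 ^ (r - 1)) ≤ y) :
    x ≤ 1 / (Real.logb 2 (2 ^ r + 2) / r - (1 + 2 ^ (r - 1)) / (r + 2 ^ (r - 1))) := by
  have hL : 1 ≤ (r + 2 ^ (r - 1)) / (1 + 2 ^ (r - 1)) := by
    rw [one_le_div (by positivity)]
    linarith
  rw [← one_div_div (r + 2 ^ (r - 1))]
  exact le_one_div_sub_one_div (by linarith) hy hxy <|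
    (div_le_one_of_le₀ hL (by linarith)).trans_lt (one_lt_logb_two_rpow_add_two_div (by linarith))

lemma ENNReal.ne_top_of_one_lt_one_div_add_one_div {p q : ℝ≥0∞} (hp : 1 ≤ p)
    (h : 1 < 1 / p + 1 / q) : q ≠ ∞ := by
  rintro rfl
  rw [ENNReal.div_top, add_zero, one_div] at h
  exact h.not_ge (ENNReal.inv_le_one.2 hp)

theorem young_hypercube_necessary_critical_line (r : ℝ) (hr : 1 < r)
    (p q : ℝ≥0∞) (hp : 1 ≤ p) (hq : 1 ≤ q)
    (hpq : 1 / p + 1 / q = ENNReal.ofReal (Real.logb 2 (2 ^ r + 2) / r))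
    (h : ∀ d : ℕ, 1 ≤ d → ∀ f g : (Fin d → ℤ) → ℝ,
      SupportedInCube f → SupportedInCube g →
        lnorm r (cconv f g) ≤ lnormE p f * lnormE q g) :
    ENNReal.ofReal ((r + 2 ^ (r - 1)) / (1 + 2 ^ (r - 1))) ≤ p ∧
    ENNReal.ofReal ((r + 2 ^ (r - 1)) / (1 + 2 ^ (r - 1))) ≤ q ∧
    p ≤ ENNReal.ofReal
        (1 / (Real.logb 2 (2 ^ r + 2) / r - (1 + 2 ^ (r - 1)) / (r + 2 ^ (r - 1)))) ∧
    q ≤ ENNReal.ofReal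
        (1 / (Real.logb 2 (2 ^ r + 2) / r - (1 + 2 ^ (r - 1)) / (r + 2 ^ (r - 1)))) := by
  have hc := one_lt_logb_two_rpow_add_two_div (zero_lt_one.trans hr)
  have hpq' : 1 < 1 / p + 1 / q := hpq ▸ ENNReal.one_lt_ofReal.2 hc
  have hp_top : p ≠ ∞ := ENNReal.ne_top_of_one_lt_one_div_add_one_div hq (by rwa [add_comm])
  have hq_top : q ≠ ∞ := ENNReal.ne_top_of_one_lt_one_div_add_one_div hp hpq'
  have hp₀ : p ≠ 0 := (zero_lt_one.trans_le hp).ne'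
  have hq₀ : q ≠ 0 := (zero_lt_one.trans_le hq).ne'
  have hP : 1 ≤ p.toReal := ENNReal.toReal_mono hp_top hp
  have hQ : 1 ≤ q.toReal := ENNReal.toReal_mono hq_top hq
  have hPQ : 1 / p.toReal + 1 / q.toReal = Real.logb 2 (2 ^ r + 2) / r := by
    simpa [ENNReal.toReal_add, hp₀, hq₀, ENNReal.toReal_ofReal (zero_le_one.trans hc.le)]
      using congrArg ENNReal.toReal hpq
  have hQP := (add_comm _ _).trans hPQ
  have hLQ := le_of_forall_twoPoint_rpow_le (by linarith) (by linarith) hPQ fun t ht =>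
    twoPoint_rpow_le_of_young (by linarith) hp₀ hp_top hq₀ hq_top (h 1 le_rfl) ht.le
  have hLP := le_of_forall_twoPoint_rpow_le (by linarith) (by linarith) hQP fun t ht =>
    twoPoint_rpow_le_of_young (by linarith) hq₀ hq_top hp₀ hp_top
      (fun f g hf hg => by rw [cconv_comm, mul_comm]; exact h 1 le_rfl g f hg hf) ht.le
  exact ⟨ENNReal.ofReal_le_of_le_toReal hLP, ENNReal.ofReal_le_of_le_toReal hLQ,
    (ENNReal.ofReal_toReal hp_top).symm.trans_le
      (ENNReal.ofReal_le_ofReal (le_one_div_logb_sub hr.le hPQ hLQ)),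
    (ENNReal.ofReal_toReal hq_top).symm.trans_le
      (ENNReal.ofReal_le_ofReal (le_one_div_logb_sub hr.le hQP hLP))⟩
end

section
/- Let 1 ≤ p, q ≤ ∞ with 1/p + 1/q < (log₂ 6)/2, or with min{1/p, 1/q} < 1/2. Then the inequality ‖f*g‖_{ℓ^2(ℤ^d)} ≤ ‖f‖_{ℓ^p(ℤ^d)} ‖g‖_{ℓ^q(ℤ^d)} fails: there exist d ≥ 1 and functions f, g : ℤ^d → ℝ supported in {0,1}^d for which ‖f*g‖_{ℓ^2(ℤ^d)} > ‖f‖_{ℓ^p(ℤ^d)} ‖g‖_{ℓ^q(ℤ^d)}. -/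
open scoped BigOperators ENNReal

namespace YoungAux
def c0 : Fin 1 → ℤ := fun _ => 0
def c1 : Fin 1 → ℤ := fun _ => 1
def c2 : Fin 1 → ℤ := fun _ => 2

lemma c0_eq : c0 = 0 := rfl
lemma c0_ne_c1 : c0 ≠ c1 := fun h => by simpa [c0, c1] using congrFun h 0
lemma c0_ne_c2 : c0 ≠ c2 := fun h => by simpa [c0, c2] using congrFun h 0
lemma c1_ne_c2 : c1 ≠ c2 := fun h => by simpa [c1, c2] using congrFun h 0
lemma c1_add_c1 : c1 + c1 = c2 := by funext i; simp [c1, c2]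

noncomputable def G : (Fin 1 → ℤ) → ℝ := fun x => if x = c0 then 1 else if x = c1 then 1 else 0

lemma G_c0 : G c0 = 1 := by simp [G]
lemma G_c1 : G c1 = 1 := by simp [G, c0_ne_c1.symm]
lemma G_eq_zero {x : Fin 1 → ℤ} (h0 : x ≠ c0) (h1 : x ≠ c1) : G x = 0 := by
  simp [G, h0, h1]

lemma tsum_G_rpow {s : ℝ} (hs : s ≠ 0) : ∑' x : Fin 1 → ℤ, |G x| ^ s = 2 := by
  rw [tsum_eq_sum (s := {c0, c1}) (f := fun x => |G x| ^ s) ?h]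
  · rw [Finset.sum_pair c0_ne_c1, G_c0, G_c1]; norm_num
  · intro x hx
    simp only [Finset.mem_insert, Finset.mem_singleton, not_or] at hx
    rw [G_eq_zero hx.1 hx.2, abs_zero, Real.zero_rpow hs]

noncomputable def δ : (Fin 1 → ℤ) → ℝ := fun x => if x = c0 then 1 else 0

lemma tsum_delta_rpow {s : ℝ} (hs : s ≠ 0) : ∑' x : Fin 1 → ℤ, |δ x| ^ s = 1 := by
  rw [tsum_eq_sum (s := {c0}) (f := fun x => |δ x| ^ s) ?h]
  · simp [δ]
  · intro x hx
    simp only [Finset.mem_singleton] at hx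
    rw [show δ x = 0 by simp [δ, hx], abs_zero, Real.zero_rpow hs]

lemma supp_G : ∀ x : Fin 1 → ℤ, ¬ (∀ i, x i = 0 ∨ x i = 1) → G x = 0 := by
  intro x hx
  refine G_eq_zero (fun h => hx ?_) (fun h => hx ?_) <;> subst h <;> intro i
  · exact Or.inl rfl
  · exact Or.inr rfl

lemma supp_delta : ∀ x : Fin 1 → ℤ, ¬ (∀ i, x i = 0 ∨ x i = 1) → δ x = 0 := by
  intro x hx
  rw [show δ x = if x = c0 then 1 else 0 from rfl, if_neg]
  intro h; subst h; exact hx fun i => Or.inl rfl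

lemma conv_dG : cconv δ G = G := by
  funext m
  have h1 : ∑' u : Fin 1 → ℤ, δ u * G (m - u) = ∑ u ∈ ({c0} : Finset _), δ u * G (m - u) :=
    tsum_eq_sum (by
      intro u hu
      simp only [Finset.mem_singleton] at hu
      simp [δ, hu])
  rw [show cconv δ G m = ∑' u : Fin 1 → ℤ, δ u * G (m - u) from rfl, h1]
  simp [δ, c0_eq]

lemma conv_Gd : cconv G δ = G := by
  funext m
  have h1 : ∑' u : Fin 1 → ℤ, G u * δ (m - u) = ∑ u ∈ ({m} : Finset _), G u * δ (m - u) :=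
    tsum_eq_sum (by
      intro u hu
      simp only [Finset.mem_singleton] at hu
      have : m - u ≠ c0 := by rw [c0_eq, sub_ne_zero]; exact fun h => hu h.symm
      simp [δ, this])
  rw [show cconv G δ m = ∑' u : Fin 1 → ℤ, G u * δ (m - u) from rfl, h1]
  simp [δ, c0_eq]

lemma conv_GG : cconv G G = fun m => G m + G (m - c1) := by
  funext m
  have h1 : ∑' u : Fin 1 → ℤ, G u * G (m - u) = ∑ u ∈ ({c0, c1} : Finset _), G u * G (m - u) :=
    tsum_eq_sum (by
      intro u hu
      simp only [Finset.mem_insert, Finset.mem_singleton, not_or] at hu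
      rw [G_eq_zero hu.1 hu.2, zero_mul])
  rw [show cconv G G m = ∑' u : Fin 1 → ℤ, G u * G (m - u) from rfl, h1,
    Finset.sum_pair c0_ne_c1, G_c0, G_c1, one_mul, one_mul, c0_eq, sub_zero]

lemma sq_cast (a : ℝ) : |a| ^ (2:ℝ) = a ^ 2 := by
  rw [show (2:ℝ) = ((2:ℕ):ℝ) from by norm_num, Real.rpow_natCast, sq_abs]

lemma tsum_conv_GG_sq : ∑' x : Fin 1 → ℤ, |cconv G G x| ^ (2:ℝ) = 6 := by
  have hGG : ∀ x, cconv G G x = G x + G (x - c1) := fun x => by rw [conv_GG]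
  have key : ∀ x : Fin 1 → ℤ, x ∉ ({c0, c1, c2} : Finset _) → |cconv G G x| ^ (2:ℝ) = 0 := by
    intro x hx
    simp only [Finset.mem_insert, Finset.mem_singleton, not_or] at hx
    have h1 : x - c1 ≠ c0 := by
      rw [c0_eq, sub_ne_zero]; exact hx.2.1
    have h2 : x - c1 ≠ c1 := by
      intro h
      exact hx.2.2 ((sub_eq_iff_eq_add.mp h).trans c1_add_c1)
    rw [hGG, G_eq_zero hx.1 hx.2.1, G_eq_zero h1 h2, add_zero, abs_zero,
      Real.zero_rpow (by norm_num)]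
  rw [tsum_eq_sum (s := {c0, c1, c2}) key]
  have e0 : c0 - c1 ≠ c0 := by
    rw [c0_eq, zero_sub, neg_ne_zero]; exact fun h => c0_ne_c1 (c0_eq ▸ h.symm)
  have e0' : c0 - c1 ≠ c1 := by
    intro h
    have := sub_eq_iff_eq_add.mp h
    rw [c1_add_c1] at this; exact c0_ne_c2 this
  have e1 : c1 - c1 = c0 := by rw [sub_self, c0_eq]
  have e2 : c2 - c1 = c1 := by rw [← c1_add_c1]; exact add_sub_cancel_right c1 c1
  rw [Finset.sum_insert (by simp [c0_ne_c1, c0_ne_c2]),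
    Finset.sum_insert (by simp [c1_ne_c2]), Finset.sum_singleton]
  rw [hGG, hGG, hGG, G_c0, G_c1, e1, e2, G_c0, G_c1,
    G_eq_zero e0 e0', G_eq_zero (fun h => c0_ne_c2 h.symm) (fun h => c1_ne_c2 h.symm)]
  rw [sq_cast, sq_cast, sq_cast]; norm_num

lemma G_abs_le (x : Fin 1 → ℤ) : |G x| ≤ 1 := by
  rw [show G x = if x = c0 then 1 else if x = c1 then 1 else 0 from rfl]
  split_ifs <;> simp

lemma delta_abs_le (x : Fin 1 → ℤ) : |δ x| ≤ 1 := by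
  rw [show δ x = if x = c0 then 1 else 0 from rfl]
  split_ifs <;> simp

lemma lnormE_G (p : ℝ≥0∞) (hp : 1 ≤ p) : lnormE p G = 2 ^ (1/p).toReal := by
  by_cases hP : p = ∞
  · subst hP
    rw [show lnormE ⊤ G = ⨆ x : Fin 1 → ℤ, |G x| from if_pos rfl]
    have h1 : (1 / (⊤ : ℝ≥0∞)).toReal = 0 := by simp
    rw [h1, Real.rpow_zero]
    refine le_antisymm (ciSup_le G_abs_le) ?_
    have := le_ciSup (f := fun x : Fin 1 → ℤ => |G x|)
      ⟨1, by rintro y ⟨x, rfl⟩; exact G_abs_le x⟩ c0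
    rwa [G_c0, abs_one] at this
  · have hp0 : p ≠ 0 := (zero_lt_one.trans_le hp).ne'
    have hs : p.toReal ≠ 0 := (ENNReal.toReal_pos hp0 hP).ne'
    rw [show lnormE p G = (∑' x : Fin 1 → ℤ, |G x| ^ p.toReal) ^ (1 / p.toReal) from if_neg hP,
      tsum_G_rpow hs, one_div, one_div, ENNReal.toReal_inv]

lemma lnormE_delta (p : ℝ≥0∞) (hp : 1 ≤ p) : lnormE p δ = 1 := by
  by_cases hP : p = ∞
  · subst hP
    rw [show lnormE ⊤ δ = ⨆ x : Fin 1 → ℤ, |δ x| from if_pos rfl]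
    refine le_antisymm (ciSup_le delta_abs_le) ?_
    have := le_ciSup (f := fun x : Fin 1 → ℤ => |δ x|)
      ⟨1, by rintro y ⟨x, rfl⟩; exact delta_abs_le x⟩ c0
    rwa [show δ c0 = 1 by simp [δ], abs_one] at this
  · have hp0 : p ≠ 0 := (zero_lt_one.trans_le hp).ne'
    have hs : p.toReal ≠ 0 := (ENNReal.toReal_pos hp0 hP).ne'
    rw [show lnormE p δ = (∑' x : Fin 1 → ℤ, |δ x| ^ p.toReal) ^ (1 / p.toReal) from if_neg hP,
      tsum_delta_rpow hs, Real.one_rpow]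

lemma lnorm2_conv_GG : lnorm 2 (cconv G G) = 6 ^ (1/2 : ℝ) := by
  rw [show lnorm 2 (cconv G G) = (∑' x : Fin 1 → ℤ, |cconv G G x| ^ (2:ℝ)) ^ (1/(2:ℝ)) from rfl,
    tsum_conv_GG_sq]

lemma lnorm2_G : lnorm 2 G = 2 ^ (1/2 : ℝ) := by
  rw [show lnorm 2 G = (∑' x : Fin 1 → ℤ, |G x| ^ (2:ℝ)) ^ (1/(2:ℝ)) from rfl,
    tsum_G_rpow (by norm_num)]

end YoungAux

theorem young_hypercube_r_two_failure (p q : ℝ≥0∞) (hp : 1 ≤ p) (hq : 1 ≤ q)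
    (hfail : 1 / p + 1 / q < ENNReal.ofReal (Real.logb 2 6 / 2) ∨
      min (1 / p) (1 / q) < ENNReal.ofReal (1 / 2)) :
    ∃ d : ℕ, 1 ≤ d ∧ ∃ f g : (Fin d → ℤ) → ℝ,
      SupportedInCube f ∧ SupportedInCube g ∧
        lnormE p f * lnormE q g < lnorm 2 (cconv f g) := by
  classical
  have hp0 : p ≠ 0 := (zero_lt_one.trans_le hp).ne'
  have hq0 : q ≠ 0 := (zero_lt_one.trans_le hq).ne'
  have hpf : 1 / p ≠ ∞ := by simp [ENNReal.div_eq_top, hp0]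
  have hqf : 1 / q ≠ ∞ := by simp [ENNReal.div_eq_top, hq0]
  rcases hfail with h | h
  · refine ⟨1, le_refl 1, YoungAux.G, YoungAux.G, YoungAux.supp_G, YoungAux.supp_G, ?_⟩
    rw [YoungAux.lnormE_G p hp, YoungAux.lnormE_G q hq, YoungAux.lnorm2_conv_GG,
      ← Real.rpow_add two_pos]
    have hab : (1/p).toReal + (1/q).toReal < Real.logb 2 6 / 2 := by
      have h2 := (ENNReal.lt_ofReal_iff_toReal_lt (ENNReal.add_ne_top.mpr ⟨hpf, hqf⟩)).mp h
      rwa [ENNReal.toReal_add hpf hqf] at h2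
    have h6 : (6:ℝ) ^ (1/2:ℝ) = 2 ^ (Real.logb 2 6 / 2) := by
      rw [div_eq_mul_one_div (Real.logb 2 6) 2, Real.rpow_mul (by norm_num),
        Real.rpow_logb (by norm_num) (by norm_num) (by norm_num)]
    rw [h6]
    exact Real.rpow_lt_rpow_of_exponent_lt one_lt_two hab
  · rcases min_lt_iff.mp h with h | h
    · refine ⟨1, le_refl 1, YoungAux.G, YoungAux.δ, YoungAux.supp_G, YoungAux.supp_delta, ?_⟩
      rw [YoungAux.lnormE_G p hp, YoungAux.lnormE_delta q hq, YoungAux.conv_Gd,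
        YoungAux.lnorm2_G, mul_one]
      have ha : (1/p).toReal < 1/2 := by
        exact (ENNReal.lt_ofReal_iff_toReal_lt hpf).mp h
      exact Real.rpow_lt_rpow_of_exponent_lt one_lt_two ha
    · refine ⟨1, le_refl 1, YoungAux.δ, YoungAux.G, YoungAux.supp_delta, YoungAux.supp_G, ?_⟩
      rw [YoungAux.lnormE_G q hq, YoungAux.lnormE_delta p hp, YoungAux.conv_dG,
        YoungAux.lnorm2_G, one_mul]
      have ha : (1/q).toReal < 1/2 := by
        exact (ENNReal.lt_ofReal_iff_toReal_lt hqf).mp h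
      exact Real.rpow_lt_rpow_of_exponent_lt one_lt_two ha
end

section
/- Let d ≥ 1 and let 4/3 ≤ p, q ≤ 1/((log₂ 3)/2 − 1/4) satisfy 1/p + 1/q = (log₂ 6)/2. Then for all A, B ⊆ {-1,1}^d (viewed as subsets of ℤ^d), the additive energy satisfies E_2(A,B) ≤ |A|^p |B|^q. -/
open scoped BigOperators

/-- The `k`-higher additive energy of two finite subsets `A, B ⊆ ℤ^d`:
the number of tuples `(a₁,…,a_k,b₁,…,b_k) ∈ Aᵏ × Bᵏ` with
`a₁ - b₁ = a₂ - b₂ = ⋯ = a_k - b_k`. -/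
noncomputable def addEnergy (d k : ℕ) (A B : Finset (Fin d → ℤ)) : ℕ :=
  Set.ncard {ab : (Fin k → (Fin d → ℤ)) × (Fin k → (Fin d → ℤ)) |
    (∀ i, ab.1 i ∈ A) ∧ (∀ i, ab.2 i ∈ B) ∧
      ∀ i j, ab.1 i - ab.2 i = ab.1 j - ab.2 j}

lemma energy_le_AAB (d : ℕ) (A B : Finset (Fin d → ℤ)) :
    addEnergy d 2 A B ≤ A.card * A.card * B.card := by
  classical
  unfold addEnergy
  set S : Set ((Fin 2 → (Fin d → ℤ)) × (Fin 2 → (Fin d → ℤ))) :=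
    {ab | (∀ i, ab.1 i ∈ A) ∧ (∀ i, ab.2 i ∈ B) ∧
      ∀ i j, ab.1 i - ab.2 i = ab.1 j - ab.2 j} with hSdef
  set φ : ((Fin 2 → (Fin d → ℤ)) × (Fin 2 → (Fin d → ℤ))) →
      (Fin d → ℤ) × (Fin d → ℤ) × (Fin d → ℤ) :=
    fun ab => (ab.1 0, ab.1 1, ab.2 0) with hφdef
  have hinj : Set.InjOn φ S := by
    rintro ⟨f, g⟩ ⟨hfA, hgB, hfg⟩ ⟨f', g'⟩ ⟨hfA', hgB', hfg'⟩ h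
    simp only [hφdef, Prod.mk.injEq] at h
    obtain ⟨h0, h1, h2⟩ := h
    have hg : ∀ (u : Fin 2 → (Fin d → ℤ)) (v : Fin 2 → (Fin d → ℤ)),
        (∀ i j, u i - v i = u j - v j) → v 1 = u 1 - (u 0 - v 0) := by
      intro u v huv
      have := huv 1 0
      linear_combination -this
    have hg1 := hg f g hfg
    have hg1' := hg f' g' hfg'
    have hf : f = f' := by
      funext i
      fin_cases i <;> assumption
    have hgg : g = g' := by
      funext i
      fin_cases i
      · exact h2
      · show g 1 = g' 1
        rw [hg1, hg1', h0, h1, h2]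
    simp [hf, hgg]
  have himg : φ '' S ⊆ ↑(A ×ˢ A ×ˢ B) := by
    rintro x ⟨⟨f, g⟩, ⟨hfA, hgB, -⟩, rfl⟩
    simp only [Finset.coe_product, Set.mem_prod, hφdef]
    exact ⟨hfA 0, hfA 1, hgB 0⟩
  calc S.ncard = (φ '' S).ncard := (Set.ncard_image_of_injOn hinj).symm
    _ ≤ (↑(A ×ˢ A ×ˢ B) : Set _).ncard :=
        Set.ncard_le_ncard himg (Finset.finite_toSet _)
    _ = A.card * A.card * B.card := by
        rw [Set.ncard_coe_finset]
        simp [Finset.card_product, mul_assoc]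

lemma energy_le_ABB (d : ℕ) (A B : Finset (Fin d → ℤ)) :
    addEnergy d 2 A B ≤ A.card * B.card * B.card := by
  classical
  unfold addEnergy
  set S : Set ((Fin 2 → (Fin d → ℤ)) × (Fin 2 → (Fin d → ℤ))) :=
    {ab | (∀ i, ab.1 i ∈ A) ∧ (∀ i, ab.2 i ∈ B) ∧
      ∀ i j, ab.1 i - ab.2 i = ab.1 j - ab.2 j} with hSdef
  set φ : ((Fin 2 → (Fin d → ℤ)) × (Fin 2 → (Fin d → ℤ))) →
      (Fin d → ℤ) × (Fin d → ℤ) × (Fin d → ℤ) :=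
    fun ab => (ab.1 0, ab.2 0, ab.2 1) with hφdef
  have hinj : Set.InjOn φ S := by
    rintro ⟨f, g⟩ ⟨hfA, hgB, hfg⟩ ⟨f', g'⟩ ⟨hfA', hgB', hfg'⟩ h
    simp only [hφdef, Prod.mk.injEq] at h
    obtain ⟨h0, h1, h2⟩ := h
    have hg : ∀ (u : Fin 2 → (Fin d → ℤ)) (v : Fin 2 → (Fin d → ℤ)),
        (∀ i j, u i - v i = u j - v j) → u 1 = v 1 + (u 0 - v 0) := by
      intro u v huv
      have := huv 1 0
      linear_combination this
    have hg1 := hg f g hfg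
    have hg1' := hg f' g' hfg'
    have hgg : g = g' := by
      funext i
      fin_cases i <;> assumption
    have hf : f = f' := by
      funext i
      fin_cases i
      · exact h0
      · show f 1 = f' 1
        rw [hg1, hg1', h0, h1, h2]
    simp [hf, hgg]
  have himg : φ '' S ⊆ ↑(A ×ˢ B ×ˢ B) := by
    rintro x ⟨⟨f, g⟩, ⟨hfA, hgB, -⟩, rfl⟩
    simp only [Finset.coe_product, Set.mem_prod, hφdef]
    exact ⟨hfA 0, hgB 0, hgB 1⟩
  calc S.ncard = (φ '' S).ncard := (Set.ncard_image_of_injOn hinj).symm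
    _ ≤ (↑(A ×ˢ B ×ˢ B) : Set _).ncard :=
        Set.ncard_le_ncard himg (Finset.finite_toSet _)
    _ = A.card * B.card * B.card := by
        rw [Set.ncard_coe_finset]
        simp [Finset.card_product, mul_assoc]

lemma logb_two_three : (3:ℝ)/2 ≤ Real.logb 2 3 := by
  have h2 : (0:ℝ) < Real.log 2 := Real.log_pos (by norm_num)
  have h89 : Real.log ((2:ℝ)^3) ≤ Real.log ((3:ℝ)^2) :=
    Real.log_le_log (by positivity) (by norm_num)
  rw [Real.log_pow, Real.log_pow] at h89
  rw [Real.logb, le_div_iff₀ h2]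
  push_cast at h89
  linarith

lemma logb_two_six : Real.logb 2 6 ≤ 8/3 := by
  have h2 : (0:ℝ) < Real.log 2 := Real.log_pos (by norm_num)
  have h : Real.log ((6:ℝ)^3) ≤ Real.log ((2:ℝ)^8) :=
    Real.log_le_log (by positivity) (by norm_num)
  rw [Real.log_pow, Real.log_pow] at h
  rw [Real.logb, div_le_iff₀ h2]
  push_cast at h
  linarith

theorem additive_energy_offdiagonal_bound (d : ℕ) (hd : 1 ≤ d) (p q : ℝ)
    (hp : 4 / 3 ≤ p) (hp' : p ≤ 1 / (Real.logb 2 3 / 2 - 1 / 4))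
    (hq : 4 / 3 ≤ q) (hq' : q ≤ 1 / (Real.logb 2 3 / 2 - 1 / 4))
    (hpq : 1 / p + 1 / q = Real.logb 2 6 / 2)
    (A B : Finset (Fin d → ℤ))
    (hA : ∀ a ∈ A, ∀ i, a i = -1 ∨ a i = 1)
    (hB : ∀ b ∈ B, ∀ i, b i = -1 ∨ b i = 1) :
    (addEnergy d 2 A B : ℝ) ≤ (A.card : ℝ) ^ p * (B.card : ℝ) ^ q := by
  have hp0 : (0:ℝ) < p := by linarith
  have hq0 : (0:ℝ) < q := by linarith
  set a : ℝ := (A.card : ℝ) with ha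
  set b : ℝ := (B.card : ℝ) with hb
  have ha0 : 0 ≤ a := by positivity
  have hb0 : 0 ≤ b := by positivity
  set E : ℝ := (addEnergy d 2 A B : ℝ) with hE
  have hE0 : 0 ≤ E := by positivity
  have hE1 : E ≤ a * a * b := by
    rw [hE, ha, hb]
    exact_mod_cast energy_le_AAB d A B
  have hE2 : E ≤ a * b * b := by
    rw [hE, ha, hb]
    exact_mod_cast energy_le_ABB d A B
  -- numeric facts
  have hp2 : p ≤ 2 := by
    have h3 := logb_two_three
    have hcpos : (0:ℝ) < Real.logb 2 3 / 2 - 1 / 4 := by linarith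
    calc p ≤ 1 / (Real.logb 2 3 / 2 - 1 / 4) := hp'
      _ ≤ 2 := by rw [div_le_iff₀ hcpos]; linarith
  have hsum : 3 ≤ p + q := by
    have h6 := logb_two_six
    have hL : 1 / p + 1 / q ≤ 4 / 3 := by rw [hpq]; linarith
    have h1 : q + p ≤ 4 / 3 * (p * q) := by
      rw [div_add_div _ _ hp0.ne' hq0.ne', div_le_iff₀ (mul_pos hp0 hq0)] at hL
      linarith
    nlinarith [sq_nonneg (p - q), mul_pos hp0 hq0]
  -- trivial cases
  by_cases hA0 : A.card = 0
  · have : a = 0 := by rw [ha, hA0]; norm_num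
    rw [this, Real.zero_rpow hp0.ne', zero_mul]
    rw [this] at hE1
    linarith
  by_cases hB0 : B.card = 0
  · have : b = 0 := by rw [hb, hB0]; norm_num
    rw [this, Real.zero_rpow hq0.ne', mul_zero]
    rw [this] at hE2
    linarith
  have ha1 : 1 ≤ a := by
    rw [ha]; exact_mod_cast Nat.one_le_iff_ne_zero.mpr hA0
  have hb1 : 1 ≤ b := by
    rw [hb]; exact_mod_cast Nat.one_le_iff_ne_zero.mpr hB0
  have hap : (0:ℝ) < a := by linarith
  have hbp : (0:ℝ) < b := by linarith
  set θ : ℝ := p - 1 with hθ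
  have hθ0 : 0 ≤ θ := by rw [hθ]; linarith
  have hθ1 : θ ≤ 1 := by rw [hθ]; linarith
  rcases eq_or_lt_of_le hE0 with hEz | hEpos
  · rw [← hEz]; positivity
  have key : E ≤ (a * a * b) ^ θ * (a * b * b) ^ (1 - θ) := by
    have h1 : E ^ θ ≤ (a * a * b) ^ θ := Real.rpow_le_rpow hE0 hE1 hθ0
    have h2 : E ^ (1 - θ) ≤ (a * b * b) ^ (1 - θ) :=
      Real.rpow_le_rpow hE0 hE2 (by linarith)
    calc E = E ^ θ * E ^ (1 - θ) := by
          rw [← Real.rpow_add hEpos]; norm_num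
      _ ≤ (a * a * b) ^ θ * (a * b * b) ^ (1 - θ) :=
          mul_le_mul h1 h2 (Real.rpow_nonneg hE0 _) (Real.rpow_nonneg (by positivity) _)
  have keq : (a * a * b) ^ θ * (a * b * b) ^ (1 - θ) = a ^ p * b ^ (3 - p) := by
    rw [Real.mul_rpow (by positivity) hb0, Real.mul_rpow ha0 ha0,
        Real.mul_rpow (by positivity) hb0, Real.mul_rpow ha0 hb0]
    rw [show a ^ θ * a ^ θ * b ^ θ * (a ^ (1 - θ) * b ^ (1 - θ) * b ^ (1 - θ))
        = (a ^ θ * a ^ θ * a ^ (1 - θ)) * (b ^ θ * b ^ (1 - θ) * b ^ (1 - θ)) by ring,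
      ← Real.rpow_add hap, ← Real.rpow_add hap, ← Real.rpow_add hbp, ← Real.rpow_add hbp]
    rw [show θ + θ + (1 - θ) = p by rw [hθ]; ring,
        show θ + (1 - θ) + (1 - θ) = 3 - p by rw [hθ]; ring]
  rw [keq] at key
  calc E ≤ a ^ p * b ^ (3 - p) := key
    _ ≤ a ^ p * b ^ q := by
      apply mul_le_mul_of_nonneg_left _ (Real.rpow_nonneg ha0 _)
      exact Real.rpow_le_rpow_of_exponent_le hb1 (by linarith)
end

section
/- Let d ≥ 1, 0 < r < 1, and set p_r := 2r / log₂(2 + 2^r). Then for all functions f, g : ℤ^d → [0,∞) supported in {0,1}^d, one has (∑_{m ∈ ℤ^d} |(f*g)(m)|^r)^{1/r} ≥ (∑_{u ∈ ℤ^d} |f(u)|^{p_r})^{1/p_r} · (∑_{v ∈ ℤ^d} |g(v)|^{p_r})^{1/p_r}. -/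
open scoped BigOperators ENNReal

open Real Finset Set

namespace RY

/-- two-point weighted AM-GM specialization: `t^θ ≤ θ t + (1-θ)`. -/
lemma amgm {t θ : ℝ} (ht : 0 ≤ t) (h0 : 0 ≤ θ) (h1 : θ ≤ 1) :
    t ^ θ ≤ θ * t + (1 - θ) := by
  have h := Real.geom_mean_le_arith_mean2_weighted h0 (by linarith : (0:ℝ) ≤ 1 - θ)
    ht zero_le_one (by ring)
  simpa using h

lemma psi_le {r t : ℝ} (hr0 : 0 < r) (hr1 : r < 1) (ht0 : 0 ≤ t) (ht1 : t ≤ 1) :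
    (1 - t ^ r) * (1 + t) ^ (1 - r) ≤ 1 - t := by
  rcases eq_or_lt_of_le ht0 with h0 | h0
  · simp [← h0, Real.zero_rpow hr0.ne', Real.one_rpow]
  have hB1 : (1 + t) ^ (1 - r) ≤ 1 + (1 - r) * t := by
    have := amgm (t := 1 + t) (θ := 1 - r) (by linarith) (by linarith) (by linarith)
    nlinarith [this]
  have hX1 : t ^ r ≤ 1 := Real.rpow_le_one ht0 ht1 hr0.le
  have hXnn : 0 ≤ t ^ r := Real.rpow_nonneg ht0 r
  have step1 : (1 - t ^ r) * (1 + t) ^ (1 - r) ≤ (1 - t ^ r) * (1 + (1 - r) * t) :=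
    mul_le_mul_of_nonneg_left hB1 (by linarith)
  -- now the algebraic part: (1 - X)(1 + (1-r)t) ≤ 1 - t  where X = t^r
  have hF1 : t ≤ t ^ r * ((1 - r) * t + r) := by
    have h := amgm (t := t) (θ := 1 - r) ht0 (by linarith) (by linarith)
    -- t^(1-r) ≤ (1-r) t + r
    have h2 : t ^ (1 - r) * t ^ r ≤ ((1 - r) * t + r) * t ^ r :=
      mul_le_mul_of_nonneg_right (by linarith [h]) hXnn
    have hid : t ^ (1 - r) * t ^ r = t := by
      rw [← Real.rpow_add h0]; norm_num
    calc t = t ^ (1 - r) * t ^ r := hid.symm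
      _ ≤ ((1 - r) * t + r) * t ^ r := h2
      _ = t ^ r * ((1 - r) * t + r) := by ring
  have hF2 : t ≤ t ^ r := by
    calc t = t ^ (1:ℝ) := (Real.rpow_one t).symm
      _ ≤ t ^ r := Real.rpow_le_rpow_of_exponent_ge h0 ht1 hr1.le
  nlinarith [step1, hF1, hF2, mul_le_mul_of_nonneg_left hF2 (by linarith : (0:ℝ) ≤ 1 - r)]

lemma psi_tilde {β z : ℝ} (hb1 : 1 ≤ β) (hb2 : β ≤ 2) (hz0 : 0 ≤ z) (hz1 : z ≤ 1) :
    (1 - z) * (1 + z) ^ (β - 1) ≤ 1 - z ^ β := by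
  have hβ0 : (0:ℝ) < β := by linarith
  rcases eq_or_lt_of_le hz0 with h0 | h0
  · simp [← h0, Real.zero_rpow hβ0.ne', Real.one_rpow]
  have hB1 : (1 + z) ^ (β - 1) ≤ 1 + (β - 1) * z := by
    have := amgm (t := 1 + z) (θ := β - 1) (by linarith) (by linarith) (by linarith)
    nlinarith [this]
  have hzb : z ^ β ≤ (2 - β) * z + (β - 1) * z ^ 2 := by
    have h := Real.geom_mean_le_arith_mean2_weighted (by linarith : (0:ℝ) ≤ 2 - β)
      (by linarith : (0:ℝ) ≤ β - 1) hz0 (by positivity : (0:ℝ) ≤ z ^ 2) (by ring)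
    have hid : z ^ (2 - β : ℝ) * (z ^ 2) ^ (β - 1 : ℝ) = z ^ β := by
      rw [show (z:ℝ)^2 = z * z by ring, Real.mul_rpow hz0 hz0, ← Real.rpow_add h0,
        ← Real.rpow_add h0]
      ring_nf
    rw [hid] at h
    linarith [h]
  have step1 : (1 - z) * (1 + z) ^ (β - 1) ≤ (1 - z) * (1 + (β - 1) * z) :=
    mul_le_mul_of_nonneg_left hB1 (by linarith)
  nlinarith [step1, hzb]


/-- The function `H` used for E3. -/
noncomputable def Hfun (r : ℝ) : ℝ → ℝ :=
  fun u => u ^ (-(r/2)) * (1+u) ^ r + (2 - 2 ^ r) - u ^ (-(r/2)) - u ^ (r/2)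

lemma Hfun_hasDeriv {r : ℝ} (u : ℝ) (hu : 0 < u) :
    HasDerivAt (Hfun r)
      ((-(r/2)) * u ^ (-(r/2)-1) * (1+u) ^ r + u ^ (-(r/2)) * (1 * r * (1+u) ^ (r-1))
        - (-(r/2)) * u ^ (-(r/2)-1) - (r/2) * u ^ (r/2-1)) u := by
  have h1 : HasDerivAt (fun u : ℝ => u ^ (-(r/2))) ((-(r/2)) * u ^ (-(r/2)-1)) u :=
    Real.hasDerivAt_rpow_const (Or.inl hu.ne')
  have h3 : HasDerivAt (fun u : ℝ => u ^ (r/2)) ((r/2) * u ^ (r/2-1)) u :=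
    Real.hasDerivAt_rpow_const (Or.inl hu.ne')
  have hlin : HasDerivAt (fun u : ℝ => 1 + u) 1 u := by
    simpa using (hasDerivAt_id u).const_add (1:ℝ)
  have h2 : HasDerivAt (fun u : ℝ => (1+u) ^ r) (1 * r * (1+u) ^ (r-1)) u :=
    hlin.rpow_const (Or.inl (by positivity))
  exact (((h1.mul h2).add_const _).sub h1).sub h3

lemma Hfun_deriv_nonpos {r u : ℝ} (hr0 : 0 < r) (hr1 : r < 1) (hu0 : 0 < u) (hu1 : u ≤ 1) :
    (-(r/2)) * u ^ (-(r/2)-1) * (1+u) ^ r + u ^ (-(r/2)) * (1 * r * (1+u) ^ (r-1))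
      - (-(r/2)) * u ^ (-(r/2)-1) - (r/2) * u ^ (r/2-1) ≤ 0 := by
  have h1u : (0:ℝ) < 1 + u := by linarith
  have e1 : u ^ (-(r/2)) = u ^ (-(r/2)-1) * u := by
    nth_rewrite 1 [show -(r/2) = (-(r/2)-1) + 1 by ring]
    rw [Real.rpow_add hu0, Real.rpow_one]
  have e2 : u ^ (r/2-1) = u ^ (-(r/2)-1) * u ^ r := by
    rw [show r/2-1 = (-(r/2)-1) + r by ring, Real.rpow_add hu0]
  have hP : (0:ℝ) < u ^ (-(r/2)-1) := Real.rpow_pos_of_pos hu0 _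
  -- M ≤ 0
  have hinv : (1+u) ^ (1-r) * (1+u) ^ (r-1) = 1 := by
    rw [← Real.rpow_add h1u]; norm_num
  have h1r : (0:ℝ) ≤ (1+u) ^ (r-1) := Real.rpow_nonneg h1u.le _
  have hψ : 1 - u ^ r ≤ (1-u) * (1+u) ^ (r-1) := by
    have h := mul_le_mul_of_nonneg_right (psi_le hr0 hr1 hu0.le hu1) h1r
    calc 1 - u ^ r = (1 - u ^ r) * ((1+u) ^ (1-r) * (1+u) ^ (r-1)) := by rw [hinv]; ring
      _ = (1 - u ^ r) * (1+u) ^ (1-r) * (1+u) ^ (r-1) := by ring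
      _ ≤ (1 - u) * (1+u) ^ (r-1) := h
  have hsplit : (1+u) * (1+u) ^ (r-1) = (1+u) ^ r := by
    nth_rewrite 1 [show (1+u) = (1+u) ^ (1:ℝ) by rw [Real.rpow_one]]
    rw [← Real.rpow_add h1u]; norm_num
  have hM : 2*u*(1+u) ^ (r-1) + 1 - u ^ r - (1+u) ^ r ≤ 0 := by nlinarith [hψ, hsplit]
  have key : (-(r/2)) * u ^ (-(r/2)-1) * (1+u) ^ r + u ^ (-(r/2)) * (1 * r * (1+u) ^ (r-1))
      - (-(r/2)) * u ^ (-(r/2)-1) - (r/2) * u ^ (r/2-1)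
      = (r/2) * u ^ (-(r/2)-1) * (2*u*(1+u) ^ (r-1) + 1 - u ^ r - (1+u) ^ r) := by
    rw [e1, e2]; ring
  rw [key]
  have : (0:ℝ) ≤ (r/2) * u ^ (-(r/2)-1) := by positivity
  exact mul_nonpos_of_nonneg_of_nonpos this hM

lemma E3 {r t : ℝ} (hr0 : 0 < r) (hr1 : r < 1) (ht0 : 0 ≤ t) (ht1 : t ≤ 1) :
    1 + t ^ r ≤ (1+t) ^ r + (2 - 2 ^ r) * t ^ (r/2) := by
  rcases eq_or_lt_of_le ht0 with h0 | h0
  · rw [← h0]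
    rw [Real.zero_rpow hr0.ne', Real.zero_rpow (by positivity : r/2 ≠ 0)]
    norm_num
  -- monotonicity of H on [t,1]
  have hcont : ContinuousOn (Hfun r) (Icc t 1) := by
    intro x hx
    exact ((Hfun_hasDeriv x (lt_of_lt_of_le h0 hx.1)).continuousAt).continuousWithinAt
  have hmono : AntitoneOn (Hfun r) (Icc t 1) := by
    apply antitoneOn_of_deriv_nonpos (convex_Icc t 1) hcont
    · intro x hx
      rw [interior_Icc] at hx
      exact ((Hfun_hasDeriv x (lt_trans h0 hx.1)).differentiableAt).differentiableWithinAt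
    · intro x hx
      rw [interior_Icc] at hx
      rw [(Hfun_hasDeriv x (lt_trans h0 hx.1)).deriv]
      exact Hfun_deriv_nonpos hr0 hr1 (lt_trans h0 hx.1) hx.2.le
  have hH1 : Hfun r 1 = 0 := by
    simp only [Hfun, Real.one_rpow]
    norm_num
  have hHt : 0 ≤ Hfun r t := by
    have := hmono (show t ∈ Icc t 1 from ⟨le_refl t, ht1⟩) (show (1:ℝ) ∈ Icc t 1 from ⟨ht1, le_refl 1⟩) ht1
    rw [hH1] at this; exact this
  -- multiply by t^(r/2)
  have hpow : (0:ℝ) < t ^ (r/2) := Real.rpow_pos_of_pos h0 _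
  have hmul : 0 ≤ t ^ (r/2) * Hfun r t := mul_nonneg hpow.le hHt
  have c1 : t ^ (r/2) * t ^ (-(r/2)) = 1 := by
    rw [← Real.rpow_add h0]; norm_num
  have c2 : t ^ (r/2) * t ^ (r/2) = t ^ r := by
    rw [← Real.rpow_add h0]; ring_nf
  have expand : t ^ (r/2) * Hfun r t
      = (1+t) ^ r + (2 - 2 ^ r) * t ^ (r/2) - 1 - t ^ r := by
    simp only [Hfun]
    have : t ^ (r/2) * (t ^ (-(r/2)) * (1+t) ^ r + (2 - 2 ^ r) - t ^ (-(r/2)) - t ^ (r/2))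
        = (t ^ (r/2) * t ^ (-(r/2))) * (1+t) ^ r + (2 - 2 ^ r) * t ^ (r/2)
          - (t ^ (r/2) * t ^ (-(r/2))) - t ^ (r/2) * t ^ (r/2) := by ring
    rw [this, c1, c2]; ring
  rw [expand] at hmul
  linarith

/-- The function for E5. -/
noncomputable def Gfun (β : ℝ) : ℝ → ℝ :=
  fun u => u ^ (-(β/2)) + u ^ (β/2) + 2 ^ β - 2 - u ^ (-(β/2)) * (1+u) ^ β

lemma Gfun_hasDeriv {β : ℝ} (u : ℝ) (hu : 0 < u) :
    HasDerivAt (Gfun β)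
      ((-(β/2)) * u ^ (-(β/2)-1) + (β/2) * u ^ (β/2-1)
        - ((-(β/2)) * u ^ (-(β/2)-1) * (1+u) ^ β + u ^ (-(β/2)) * (1 * β * (1+u) ^ (β-1)))) u := by
  have h1 : HasDerivAt (fun u : ℝ => u ^ (-(β/2))) ((-(β/2)) * u ^ (-(β/2)-1)) u :=
    Real.hasDerivAt_rpow_const (Or.inl hu.ne')
  have h3 : HasDerivAt (fun u : ℝ => u ^ (β/2)) ((β/2) * u ^ (β/2-1)) u :=
    Real.hasDerivAt_rpow_const (Or.inl hu.ne')
  have hlin : HasDerivAt (fun u : ℝ => 1 + u) 1 u := by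
    simpa using (hasDerivAt_id u).const_add (1:ℝ)
  have h2 : HasDerivAt (fun u : ℝ => (1+u) ^ β) (1 * β * (1+u) ^ (β-1)) u :=
    hlin.rpow_const (Or.inl (by positivity))
  have : HasDerivAt (fun u : ℝ => u ^ (-(β/2)) + u ^ (β/2) + 2 ^ β - 2 - u ^ (-(β/2)) * (1+u) ^ β)
      ((-(β/2)) * u ^ (-(β/2)-1) + (β/2) * u ^ (β/2-1)
        - ((-(β/2)) * u ^ (-(β/2)-1) * (1+u) ^ β + u ^ (-(β/2)) * (1 * β * (1+u) ^ (β-1)))) u :=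
    ((((h1.add h3).add_const _).sub_const _).sub (h1.mul h2))
  exact this

lemma Gfun_deriv_nonpos {β u : ℝ} (hb1 : 1 ≤ β) (hb2 : β ≤ 2) (hu0 : 0 < u) (hu1 : u ≤ 1) :
    (-(β/2)) * u ^ (-(β/2)-1) + (β/2) * u ^ (β/2-1)
      - ((-(β/2)) * u ^ (-(β/2)-1) * (1+u) ^ β + u ^ (-(β/2)) * (1 * β * (1+u) ^ (β-1))) ≤ 0 := by
  have hβ0 : (0:ℝ) < β := by linarith
  have h1u : (0:ℝ) < 1 + u := by linarith
  have e1 : u ^ (-(β/2)) = u ^ (-(β/2)-1) * u := by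
    nth_rewrite 1 [show -(β/2) = (-(β/2)-1) + 1 by ring]
    rw [Real.rpow_add hu0, Real.rpow_one]
  have e2 : u ^ (β/2-1) = u ^ (-(β/2)-1) * u ^ β := by
    rw [show β/2-1 = (-(β/2)-1) + β by ring, Real.rpow_add hu0]
  have hP : (0:ℝ) < u ^ (-(β/2)-1) := Real.rpow_pos_of_pos hu0 _
  have hsplit : (1+u) * (1+u) ^ (β-1) = (1+u) ^ β := by
    nth_rewrite 1 [show (1+u) = (1+u) ^ (1:ℝ) by rw [Real.rpow_one]]
    rw [← Real.rpow_add h1u]; norm_num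
  have hψ : (1-u) * (1+u) ^ (β-1) ≤ 1 - u ^ β := psi_tilde hb1 hb2 hu0.le hu1
  have hM : (1+u) ^ β - 2*u*(1+u) ^ (β-1) - 1 + u ^ β ≤ 0 := by nlinarith [hψ, hsplit]
  have key : (-(β/2)) * u ^ (-(β/2)-1) + (β/2) * u ^ (β/2-1)
      - ((-(β/2)) * u ^ (-(β/2)-1) * (1+u) ^ β + u ^ (-(β/2)) * (1 * β * (1+u) ^ (β-1)))
      = (β/2) * u ^ (-(β/2)-1) * ((1+u) ^ β - 2*u*(1+u) ^ (β-1) - 1 + u ^ β) := by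
    rw [e1, e2]; ring
  rw [key]
  exact mul_nonpos_of_nonneg_of_nonpos (by positivity) hM

lemma E5 {β z : ℝ} (hb1 : 1 ≤ β) (hb2 : β ≤ 2) (hz0 : 0 ≤ z) (hz1 : z ≤ 1) :
    (1+z) ^ β ≤ 1 + z ^ β + (2 ^ β - 2) * z ^ (β/2) := by
  have hβ0 : (0:ℝ) < β := by linarith
  rcases eq_or_lt_of_le hz0 with h0 | h0
  · rw [← h0, Real.zero_rpow hβ0.ne', Real.zero_rpow (by positivity : β/2 ≠ 0)]
    norm_num
  have hcont : ContinuousOn (Gfun β) (Icc z 1) := by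
    intro x hx
    exact ((Gfun_hasDeriv x (lt_of_lt_of_le h0 hx.1)).continuousAt).continuousWithinAt
  have hmono : AntitoneOn (Gfun β) (Icc z 1) := by
    apply antitoneOn_of_deriv_nonpos (convex_Icc z 1) hcont
    · intro x hx
      rw [interior_Icc] at hx
      exact ((Gfun_hasDeriv x (lt_trans h0 hx.1)).differentiableAt).differentiableWithinAt
    · intro x hx
      rw [interior_Icc] at hx
      rw [(Gfun_hasDeriv x (lt_trans h0 hx.1)).deriv]
      exact Gfun_deriv_nonpos hb1 hb2 (lt_trans h0 hx.1) hx.2.le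
  have hH1 : Gfun β 1 = 0 := by
    simp only [Gfun, Real.one_rpow]
    norm_num
  have hHz : 0 ≤ Gfun β z := by
    have := hmono (show z ∈ Icc z 1 from ⟨le_refl z, hz1⟩) (show (1:ℝ) ∈ Icc z 1 from ⟨hz1, le_refl 1⟩) hz1
    rw [hH1] at this; exact this
  have hpow : (0:ℝ) < z ^ (β/2) := Real.rpow_pos_of_pos h0 _
  have hmul : 0 ≤ z ^ (β/2) * Gfun β z := mul_nonneg hpow.le hHz
  have c1 : z ^ (β/2) * z ^ (-(β/2)) = 1 := by
    rw [← Real.rpow_add h0]; norm_num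
  have c2 : z ^ (β/2) * z ^ (β/2) = z ^ β := by
    rw [← Real.rpow_add h0]; ring_nf
  have expand : z ^ (β/2) * Gfun β z
      = 1 + z ^ β + (2 ^ β - 2) * z ^ (β/2) - (1+z) ^ β := by
    simp only [Gfun]
    have : z ^ (β/2) * (z ^ (-(β/2)) + z ^ (β/2) + 2 ^ β - 2 - z ^ (-(β/2)) * (1+z) ^ β)
        = (z ^ (β/2) * z ^ (-(β/2))) + z ^ (β/2) * z ^ (β/2) + (2 ^ β - 2) * z ^ (β/2)
          - (z ^ (β/2) * z ^ (-(β/2))) * (1+z) ^ β := by ring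
    rw [this, c1, c2]; ring
  rw [expand] at hmul
  linarith

lemma E5' {β z : ℝ} (hb1 : 1 ≤ β) (hb2 : β ≤ 2) (hz0 : 0 ≤ z) :
    (1+z) ^ β ≤ 1 + z ^ β + (2 ^ β - 2) * z ^ (β/2) := by
  rcases le_or_gt z 1 with hz1 | hz1
  · exact E5 hb1 hb2 hz0 hz1
  have hz0' : (0:ℝ) < z := by linarith
  have h := E5 hb1 hb2 (by positivity : (0:ℝ) ≤ z⁻¹) (by
    rw [inv_le_one_iff₀]; right; linarith)
  have hβ0 : (0:ℝ) < β := by linarith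
  have hzb : (0:ℝ) < z ^ β := Real.rpow_pos_of_pos hz0' _
  have hmul := mul_le_mul_of_nonneg_left h hzb.le
  have i1 : z ^ β * (1+z⁻¹) ^ β = (1+z) ^ β := by
    rw [← Real.mul_rpow hz0'.le (by positivity)]
    congr 1; field_simp; ring
  have i2 : z ^ β * (z⁻¹) ^ β = 1 := by
    rw [← Real.mul_rpow hz0'.le (by positivity), mul_inv_cancel₀ hz0'.ne', Real.one_rpow]
  have i3 : z ^ β * (z⁻¹) ^ (β/2) = z ^ (β/2) := by
    rw [Real.inv_rpow hz0'.le, ← Real.rpow_neg hz0'.le, ← Real.rpow_add hz0']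
    ring_nf
  calc (1+z) ^ β = z ^ β * (1+z⁻¹) ^ β := i1.symm
    _ ≤ z ^ β * (1 + (z⁻¹) ^ β + (2 ^ β - 2) * (z⁻¹) ^ (β/2)) := hmul
    _ = z ^ β + z ^ β * (z⁻¹) ^ β + (2 ^ β - 2) * (z ^ β * (z⁻¹) ^ (β/2)) := by ring
    _ = 1 + z ^ β + (2 ^ β - 2) * z ^ (β/2) := by rw [i2, i3]; ring


lemma K1 {r x y : ℝ} (hr0 : 0 < r) (hr1 : r < 1) (hx : 0 ≤ x) (hy : 0 ≤ y) :
    2 ^ r * (x ^ r + y ^ r) ≤ 2 * (x + y) ^ r := by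
  have hc := (Real.concaveOn_rpow hr0.le hr1.le).2 (Set.mem_Ici.2 hx) (Set.mem_Ici.2 hy)
    (by norm_num : (0:ℝ) ≤ 1/2) (by norm_num : (0:ℝ) ≤ 1/2) (by norm_num)
  simp only [smul_eq_mul] at hc
  have hdiv : ((1:ℝ)/2 * x + 1/2 * y) ^ r = (x+y) ^ r / 2 ^ r := by
    rw [show (1:ℝ)/2 * x + 1/2 * y = (x+y)/2 by ring,
      Real.div_rpow (by linarith) (by norm_num)]
  rw [hdiv] at hc
  have h2r : (0:ℝ) < 2 ^ r := Real.rpow_pos_of_pos (by norm_num) r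
  have := mul_le_mul_of_nonneg_left hc h2r.le
  rw [mul_div_cancel₀ _ h2r.ne'] at this
  nlinarith [this]

lemma K2aux {r x y : ℝ} (hr0 : 0 < r) (hr1 : r < 1) (hx : 0 ≤ x) (hy : 0 ≤ y) (hyx : y ≤ x) :
    x ^ r + y ^ r ≤ (x+y) ^ r + (2 - 2 ^ r) * (x*y) ^ (r/2) := by
  rcases eq_or_lt_of_le hx with h0 | h0
  · have hy0 : y = 0 := le_antisymm (h0 ▸ hyx) hy
    rw [← h0, hy0]
    simp [Real.zero_rpow hr0.ne', Real.zero_rpow (by positivity : r/2 ≠ 0)]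
  have ht0 : 0 ≤ y / x := by positivity
  have ht1 : y / x ≤ 1 := div_le_one_of_le₀ hyx hx
  have h := E3 hr0 hr1 ht0 ht1
  have hxr : (0:ℝ) < x ^ r := Real.rpow_pos_of_pos h0 r
  have hmul := mul_le_mul_of_nonneg_left h hxr.le
  have i1 : x ^ r * (y/x) ^ r = y ^ r := by
    rw [← Real.mul_rpow hx ht0, mul_div_cancel₀ _ h0.ne']
  have i2 : x ^ r * (1 + y/x) ^ r = (x+y) ^ r := by
    rw [← Real.mul_rpow hx (by positivity)]
    congr 1; field_simp
  have i3 : x ^ r * (y/x) ^ (r/2) = (x*y) ^ (r/2) := by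
    have hxx : x ^ r = (x*x) ^ (r/2 : ℝ) := by
      rw [Real.mul_rpow hx hx, ← Real.rpow_add h0]; ring_nf
    rw [hxx, ← Real.mul_rpow (by positivity) ht0]
    congr 1; field_simp
  calc x ^ r + y ^ r = x ^ r * (1 + (y/x) ^ r) := by rw [mul_add, mul_one, i1]
    _ ≤ x ^ r * ((1 + y/x) ^ r + (2 - 2 ^ r) * (y/x) ^ (r/2)) := hmul
    _ = (x+y) ^ r + (2 - 2 ^ r) * (x*y) ^ (r/2) := by
        rw [mul_add, i2, show x ^ r * ((2 - 2 ^ r) * (y/x) ^ (r/2))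
          = (2 - 2 ^ r) * (x ^ r * (y/x) ^ (r/2)) by ring, i3]

lemma K2 {r x y : ℝ} (hr0 : 0 < r) (hr1 : r < 1) (hx : 0 ≤ x) (hy : 0 ≤ y) :
    x ^ r + y ^ r ≤ (x+y) ^ r + (2 - 2 ^ r) * (x*y) ^ (r/2) := by
  rcases le_total y x with h | h
  · exact K2aux hr0 hr1 hx hy h
  · have := K2aux hr0 hr1 hy hx h
    rw [add_comm (y ^ r), add_comm y x, mul_comm y x] at this
    exact this

lemma star2 {r x y : ℝ} (hr0 : 0 < r) (hr1 : r < 1) (hx : 0 ≤ x) (hy : 0 ≤ y) :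
    (1 + 2 ^ r * x ^ r + x ^ r * x ^ r) * (1 + 2 ^ r * y ^ r + y ^ r * y ^ r)
      ≤ (1 + (x+y) ^ r + (x*y) ^ r) ^ 2 := by
  set a := x ^ r with ha_def
  set b := y ^ r with hb_def
  set m := (x*y) ^ (r/2 : ℝ) with hm_def
  set s := (x+y) ^ r with hs_def
  set c := (2:ℝ) ^ r with hc_def
  have ha : 0 ≤ a := Real.rpow_nonneg hx r
  have hb : 0 ≤ b := Real.rpow_nonneg hy r
  have hmnn : 0 ≤ m := Real.rpow_nonneg (by positivity) _
  have hs : 0 ≤ s := Real.rpow_nonneg (by positivity) r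
  have hc0 : 0 ≤ c := Real.rpow_nonneg (by norm_num) r
  have hm : m * m = a * b := by
    rw [hm_def, ← Real.rpow_add' (by positivity) (by ring_nf; positivity)]
    ring_nf
    rw [Real.mul_rpow hx hy]
  have hK1 : c * (a+b) ≤ 2 * s := K1 hr0 hr1 hx hy
  have hK2 : a + b ≤ s + (2 - c) * m := K2 hr0 hr1 hx hy
  have key : (1+s+m*m)^2 - (1+c*a+a*a)*(1+c*b+b*b)
      = (2*s-c*(a+b))*(m-1)^2 + (s+a+b+(2+c)*m)*(s-a-b+(2-c)*m)
        + (m*m - a*b)*(m*m + a*b + c*a + c*b + c^2 - 2) := by ring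
  have hT1 : 0 ≤ (2*s-c*(a+b))*(m-1)^2 :=
    mul_nonneg (by linarith) (sq_nonneg _)
  have hT2 : 0 ≤ (s+a+b+(2+c)*m)*(s-a-b+(2-c)*m) :=
    mul_nonneg (by positivity) (by linarith)
  have hz : m*m - a*b = 0 := by rw [hm]; ring
  have hmm : (x*y) ^ r = m * m := by rw [hm, ha_def, hb_def, ← Real.mul_rpow hx hy]
  rw [hmm]
  nlinarith [key, hT1, hT2, hz]

lemma real_add_rpow {A B e : ℝ} (hA : 0 ≤ A) (hB : 0 ≤ B) (he : 1 ≤ e) :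
    A ^ e + B ^ e ≤ (A + B) ^ e := by
  have h := NNReal.add_rpow_le_rpow_add (Real.toNNReal A) (Real.toNNReal B) he
  rw [← NNReal.coe_le_coe] at h
  push_cast at h
  rwa [Real.coe_toNNReal _ hA, Real.coe_toNNReal _ hB] at h

lemma lp_le_lr {r p b0 b1 : ℝ} (hr0 : 0 < r) (hrp : r ≤ p) (h0 : 0 ≤ b0) (h1 : 0 ≤ b1) :
    (b0 ^ p + b1 ^ p) ^ (r/p) ≤ b0 ^ r + b1 ^ r := by
  have hp0 : 0 < p := lt_of_lt_of_le hr0 hrp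
  have he : 1 ≤ p/r := (one_le_div hr0).2 hrp
  have hA : (b0 ^ r) ^ (p/r : ℝ) = b0 ^ p := by
    rw [← Real.rpow_mul h0]; congr 1; field_simp
  have hB : (b1 ^ r) ^ (p/r : ℝ) = b1 ^ p := by
    rw [← Real.rpow_mul h1]; congr 1; field_simp
  have h := real_add_rpow (Real.rpow_nonneg h0 r) (Real.rpow_nonneg h1 r) he
  rw [hA, hB] at h
  have h2 := Real.rpow_le_rpow (by positivity) h (by positivity : (0:ℝ) ≤ r/p)
  have h3 : ((b0 ^ r + b1 ^ r) ^ (p/r : ℝ)) ^ (r/p : ℝ) = b0 ^ r + b1 ^ r := by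
    rw [← Real.rpow_mul (by positivity)]
    rw [show (p/r) * (r/p) = 1 by field_simp, Real.rpow_one]
  rwa [h3] at h2

lemma two_point_normalized {r p q x y : ℝ} (hr0 : 0 < r) (hr1 : r < 1) (hp0 : 0 < p)
    (hq : q = r / p) (hb1 : 1 ≤ 2*q) (hb2 : 2*q ≤ 2) (h2q : (2:ℝ) ^ (2*q) = 2 + 2 ^ r)
    (hx : 0 ≤ x) (hy : 0 ≤ y) :
    ((1 + x ^ p) * (1 + y ^ p)) ^ q ≤ 1 + (x+y) ^ r + (x*y) ^ r := by
  have hq0 : 0 < q := by rw [hq]; positivity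
  have hVx : (1 + x ^ p) ^ (2*q) ≤ 1 + 2 ^ r * x ^ r + x ^ r * x ^ r := by
    have h := E5' (β := 2*q) (z := x ^ p) hb1 hb2 (Real.rpow_nonneg hx p)
    have i1 : (x ^ p) ^ (2*q : ℝ) = x ^ r * x ^ r := by
      rw [← Real.rpow_mul hx, ← Real.rpow_add' hx (by positivity : r + r ≠ 0)]
      congr 1; rw [hq]; field_simp; ring
    have i2 : (x ^ p) ^ (2*q/2 : ℝ) = x ^ r := by
      rw [← Real.rpow_mul hx]; congr 1; rw [hq]; field_simp
    rw [i1, i2, h2q] at h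
    calc (1 + x ^ p) ^ (2*q) ≤ 1 + x ^ r * x ^ r + (2 + 2 ^ r - 2) * x ^ r := h
      _ = 1 + 2 ^ r * x ^ r + x ^ r * x ^ r := by ring
  have hVy : (1 + y ^ p) ^ (2*q) ≤ 1 + 2 ^ r * y ^ r + y ^ r * y ^ r := by
    have h := E5' (β := 2*q) (z := y ^ p) hb1 hb2 (Real.rpow_nonneg hy p)
    have i1 : (y ^ p) ^ (2*q : ℝ) = y ^ r * y ^ r := by
      rw [← Real.rpow_mul hy, ← Real.rpow_add' hy (by positivity : r + r ≠ 0)]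
      congr 1; rw [hq]; field_simp; ring
    have i2 : (y ^ p) ^ (2*q/2 : ℝ) = y ^ r := by
      rw [← Real.rpow_mul hy]; congr 1; rw [hq]; field_simp
    rw [i1, i2, h2q] at h
    calc (1 + y ^ p) ^ (2*q) ≤ 1 + y ^ r * y ^ r + (2 + 2 ^ r - 2) * y ^ r := h
      _ = 1 + 2 ^ r * y ^ r + y ^ r * y ^ r := by ring
  have hA : (0:ℝ) < 1 + x ^ p := by positivity
  have hB : (0:ℝ) < 1 + y ^ p := by positivity
  set T := ((1 + x ^ p) * (1 + y ^ p)) ^ q with hT_def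
  have hT : 0 ≤ T := Real.rpow_nonneg (by positivity) q
  set N := 1 + (x+y) ^ r + (x*y) ^ r with hN_def
  have hN : 0 ≤ N := by
    have := Real.rpow_nonneg (show (0:ℝ) ≤ x + y by positivity) r
    have := Real.rpow_nonneg (show (0:ℝ) ≤ x * y by positivity) r
    rw [hN_def]; linarith
  have hsq : T ^ 2 ≤ N ^ 2 := by
    have e1 : T ^ 2 = (1 + x ^ p) ^ (2*q) * (1 + y ^ p) ^ (2*q) := by
      rw [hT_def, ← Real.rpow_natCast (((1 + x ^ p) * (1 + y ^ p)) ^ q) 2,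
        ← Real.rpow_mul (by positivity)]
      push_cast
      rw [show q * 2 = 2 * q by ring, Real.mul_rpow hA.le hB.le]
    rw [e1]
    calc (1 + x ^ p) ^ (2*q) * (1 + y ^ p) ^ (2*q)
        ≤ (1 + 2 ^ r * x ^ r + x ^ r * x ^ r) * (1 + 2 ^ r * y ^ r + y ^ r * y ^ r) := by
          apply mul_le_mul hVx hVy (Real.rpow_nonneg hB.le _)
          positivity
      _ ≤ N ^ 2 := star2 hr0 hr1 hx hy
  calc T = Real.sqrt (T ^ 2) := (Real.sqrt_sq hT).symm
    _ ≤ Real.sqrt (N ^ 2) := Real.sqrt_le_sqrt hsq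
    _ = N := Real.sqrt_sq hN


lemma two_point {r p q a0 a1 b0 b1 : ℝ} (hr0 : 0 < r) (hr1 : r < 1) (hp0 : 0 < p)
    (hq : q = r / p) (hqb1 : 1 ≤ 2*q) (hqb2 : 2*q ≤ 2) (h2q : (2:ℝ) ^ (2*q) = 2 + 2 ^ r)
    (ha0 : 0 ≤ a0) (ha1 : 0 ≤ a1) (hb0 : 0 ≤ b0) (hb1 : 0 ≤ b1) :
    ((a0 ^ p + a1 ^ p) * (b0 ^ p + b1 ^ p)) ^ q
      ≤ (a0*b0) ^ r + (a0*b1 + a1*b0) ^ r + (a1*b1) ^ r := by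
  have hq0 : 0 < q := by rw [hq]; positivity
  have hrp : r ≤ p := by
    have hq1 : q ≤ 1 := by linarith
    rw [hq] at hq1
    calc r = (r/p) * p := by field_simp
      _ ≤ 1 * p := mul_le_mul_of_nonneg_right hq1 hp0.le
      _ = p := one_mul p
  have ppow : ∀ z : ℝ, 0 ≤ z → (z ^ p) ^ (q:ℝ) = z ^ r := by
    intro z hz
    rw [← Real.rpow_mul hz]; congr 1; rw [hq]; field_simp
  rcases eq_or_lt_of_le ha0 with h0a | h0a
  · -- a0 = 0
    rw [← h0a]
    simp only [Real.zero_rpow hp0.ne', Real.zero_rpow hr0.ne', zero_mul, zero_add]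
    have e1 : (a1 ^ p * (b0 ^ p + b1 ^ p)) ^ q = a1 ^ r * (b0 ^ p + b1 ^ p) ^ q := by
      rw [Real.mul_rpow (by positivity) (by positivity), ppow a1 ha1]
    rw [e1]
    have h2 : (b0 ^ p + b1 ^ p) ^ q ≤ b0 ^ r + b1 ^ r := by
      rw [hq]; exact lp_le_lr hr0 hrp hb0 hb1
    calc a1 ^ r * (b0 ^ p + b1 ^ p) ^ q ≤ a1 ^ r * (b0 ^ r + b1 ^ r) :=
          mul_le_mul_of_nonneg_left h2 (Real.rpow_nonneg ha1 r)
      _ = (a1*b0) ^ r + (a1*b1) ^ r := by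
          rw [Real.mul_rpow ha1 hb0, Real.mul_rpow ha1 hb1]; ring
  rcases eq_or_lt_of_le hb0 with h0b | h0b
  · -- b0 = 0
    rw [← h0b]
    simp only [Real.zero_rpow hp0.ne', Real.zero_rpow hr0.ne', mul_zero, zero_add, add_zero]
    have e1 : ((a0 ^ p + a1 ^ p) * b1 ^ p) ^ q = (a0 ^ p + a1 ^ p) ^ q * b1 ^ r := by
      rw [Real.mul_rpow (by positivity) (by positivity), ppow b1 hb1]
    rw [e1]
    have h2 : (a0 ^ p + a1 ^ p) ^ q ≤ a0 ^ r + a1 ^ r := by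
      rw [hq]; exact lp_le_lr hr0 hrp ha0 ha1
    calc (a0 ^ p + a1 ^ p) ^ q * b1 ^ r ≤ (a0 ^ r + a1 ^ r) * b1 ^ r :=
          mul_le_mul_of_nonneg_right h2 (Real.rpow_nonneg hb1 r)
      _ = (a0*b1) ^ r + (a1*b1) ^ r := by
          rw [Real.mul_rpow ha0 hb1, Real.mul_rpow ha1 hb1]; ring
  -- main case
  have main : ∀ x y : ℝ, 0 ≤ x → 0 ≤ y → a1 = a0 * x → b1 = b0 * y →
      ((a0 ^ p + a1 ^ p) * (b0 ^ p + b1 ^ p)) ^ q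
        ≤ (a0*b0) ^ r + (a0*b1 + a1*b0) ^ r + (a1*b1) ^ r := by
    intro x y hx hy ea eb
    have hcore := two_point_normalized hr0 hr1 hp0 hq hqb1 hqb2 h2q hx hy
    have habr : (0:ℝ) ≤ (a0*b0) ^ r := Real.rpow_nonneg (by positivity) r
    have hmul := mul_le_mul_of_nonneg_left hcore habr
    have e3 : (a0 ^ p * b0 ^ p : ℝ) ^ (q:ℝ) = (a0*b0) ^ r := by
      rw [← Real.mul_rpow ha0 hb0]
      exact ppow (a0*b0) (by positivity)
    have eL : ((a0 ^ p + a1 ^ p) * (b0 ^ p + b1 ^ p)) ^ q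
        = (a0*b0) ^ r * ((1 + x ^ p) * (1 + y ^ p)) ^ q := by
      have e1 : a0 ^ p + a1 ^ p = a0 ^ p * (1 + x ^ p) := by
        rw [ea, Real.mul_rpow ha0 hx]; ring
      have e2 : b0 ^ p + b1 ^ p = b0 ^ p * (1 + y ^ p) := by
        rw [eb, Real.mul_rpow hb0 hy]; ring
      rw [e1, e2, show a0 ^ p * (1 + x ^ p) * (b0 ^ p * (1 + y ^ p))
        = (a0 ^ p * b0 ^ p) * ((1 + x ^ p) * (1 + y ^ p)) by ring,
        Real.mul_rpow (by positivity) (by positivity), e3]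
    have eR : (a0*b0) ^ r * (1 + (x+y) ^ r + (x*y) ^ r)
        = (a0*b0) ^ r + (a0*b1 + a1*b0) ^ r + (a1*b1) ^ r := by
      have e1 : a0*b1 + a1*b0 = (a0*b0) * (x + y) := by rw [ea, eb]; ring
      have e2 : a1*b1 = (a0*b0) * (x*y) := by rw [ea, eb]; ring
      have f1 : (a0*b1 + a1*b0) ^ r = (a0*b0) ^ r * (x+y) ^ r := by
        rw [e1, Real.mul_rpow (by positivity) (by positivity)]
      have f2 : (a1*b1) ^ r = (a0*b0) ^ r * (x*y) ^ r := by
        rw [e2, Real.mul_rpow (by positivity) (by positivity)]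
      rw [f1, f2]; ring
    rw [← eL, eR] at hmul
    exact hmul
  exact main (a1/a0) (b1/b0) (by positivity) (by positivity)
    (by rw [mul_div_cancel₀ _ h0a.ne']) (by rw [mul_div_cancel₀ _ h0b.ne'])

lemma rev_mink {ι : Type*} (s : Finset ι) {r : ℝ} (hr0 : 0 < r) (hr1 : r < 1) (φ χ : ι → ℝ)
    (hφ : ∀ i ∈ s, 0 ≤ φ i) (hχ : ∀ i ∈ s, 0 ≤ χ i) :
    ((∑ i ∈ s, φ i ^ r) ^ (1/r : ℝ) + (∑ i ∈ s, χ i ^ r) ^ (1/r : ℝ)) ^ r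
      ≤ ∑ i ∈ s, (φ i + χ i) ^ r := by
  set C := ∑ i ∈ s, φ i ^ r with hC_def
  set D := ∑ i ∈ s, χ i ^ r with hD_def
  have hC : 0 ≤ C := Finset.sum_nonneg fun i hi => Real.rpow_nonneg (hφ i hi) r
  have hD : 0 ≤ D := Finset.sum_nonneg fun i hi => Real.rpow_nonneg (hχ i hi) r
  have hinvr : (1/r : ℝ) ≠ 0 := by positivity
  have hpowr : ∀ z : ℝ, 0 ≤ z → (z ^ (1/r : ℝ)) ^ r = z := by
    intro z hz
    rw [← Real.rpow_mul hz]
    rw [show (1/r) * r = 1 by field_simp, Real.rpow_one]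
  rcases eq_or_lt_of_le hC with hC0 | hC0
  · have hzero : ∀ i ∈ s, φ i = 0 := by
      intro i hi
      have h := (Finset.sum_eq_zero_iff_of_nonneg
        (fun j hj => Real.rpow_nonneg (hφ j hj) r)).mp hC0.symm i hi
      exact (Real.rpow_eq_zero (hφ i hi) hr0.ne').mp h
    have hRHS : ∑ i ∈ s, (φ i + χ i) ^ r = D := by
      apply Finset.sum_congr rfl
      intro i hi; rw [hzero i hi, zero_add]
    rw [hRHS, ← hC0, Real.zero_rpow hinvr, zero_add, hpowr D hD]
  rcases eq_or_lt_of_le hD with hD0 | hD0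
  · have hzero : ∀ i ∈ s, χ i = 0 := by
      intro i hi
      have h := (Finset.sum_eq_zero_iff_of_nonneg
        (fun j hj => Real.rpow_nonneg (hχ j hj) r)).mp hD0.symm i hi
      exact (Real.rpow_eq_zero (hχ i hi) hr0.ne').mp h
    have hRHS : ∑ i ∈ s, (φ i + χ i) ^ r = C := by
      apply Finset.sum_congr rfl
      intro i hi; rw [hzero i hi, add_zero]
    rw [hRHS, ← hD0, Real.zero_rpow hinvr, add_zero, hpowr C hC]
  set lam := C ^ (1/r : ℝ) with hlam_def
  set mu := D ^ (1/r : ℝ) with hmu_def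
  have hlam : 0 < lam := Real.rpow_pos_of_pos hC0 _
  have hmu : 0 < mu := Real.rpow_pos_of_pos hD0 _
  have hlm : 0 < lam + mu := by linarith
  have hlamr : lam ^ r = C := hpowr C hC
  have hmur : mu ^ r = D := hpowr D hD
  have pointwise : ∀ i ∈ s, (lam+mu) ^ r *
      ((lam/(lam+mu)) * (φ i/lam) ^ r + (mu/(lam+mu)) * (χ i/mu) ^ r) ≤ (φ i + χ i) ^ r := by
    intro i hi
    have hc := (Real.concaveOn_rpow hr0.le hr1.le).2
      (Set.mem_Ici.2 (div_nonneg (hφ i hi) hlam.le))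
      (Set.mem_Ici.2 (div_nonneg (hχ i hi) hmu.le))
      (div_nonneg hlam.le hlm.le) (div_nonneg hmu.le hlm.le)
      (by field_simp)
    simp only [smul_eq_mul] at hc
    have harg : lam/(lam+mu) * (φ i/lam) + mu/(lam+mu) * (χ i/mu) = (φ i + χ i)/(lam+mu) := by
      field_simp
    rw [harg] at hc
    have hdr : ((φ i + χ i)/(lam+mu)) ^ r = (φ i + χ i) ^ r / (lam+mu) ^ r :=
      Real.div_rpow (by linarith [hφ i hi, hχ i hi]) hlm.le r
    rw [hdr] at hc
    have hpos : (0:ℝ) < (lam+mu) ^ r := Real.rpow_pos_of_pos hlm r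
    calc (lam+mu) ^ r * ((lam/(lam+mu)) * (φ i/lam) ^ r + (mu/(lam+mu)) * (χ i/mu) ^ r)
        ≤ (lam+mu) ^ r * ((φ i + χ i) ^ r / (lam+mu) ^ r) :=
          mul_le_mul_of_nonneg_left hc hpos.le
      _ = (φ i + χ i) ^ r := by field_simp
  have hsum := Finset.sum_le_sum pointwise
  have hLHS : ∑ i ∈ s, (lam+mu) ^ r *
      ((lam/(lam+mu)) * (φ i/lam) ^ r + (mu/(lam+mu)) * (χ i/mu) ^ r) = (lam+mu) ^ r := by
    rw [← Finset.mul_sum]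
    have e1 : ∑ i ∈ s, ((lam/(lam+mu)) * (φ i/lam) ^ r + (mu/(lam+mu)) * (χ i/mu) ^ r)
        = (lam/(lam+mu)) * ∑ i ∈ s, (φ i/lam) ^ r
          + (mu/(lam+mu)) * ∑ i ∈ s, (χ i/mu) ^ r := by
      rw [Finset.sum_add_distrib, Finset.mul_sum, Finset.mul_sum]
    have e2 : ∑ i ∈ s, (φ i/lam) ^ r = 1 := by
      have : ∀ i ∈ s, (φ i/lam) ^ r = φ i ^ r / lam ^ r := fun i hi =>
        Real.div_rpow (hφ i hi) hlam.le r
      rw [Finset.sum_congr rfl this, ← Finset.sum_div, hlamr, ← hC_def,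
        div_self hC0.ne']
    have e3 : ∑ i ∈ s, (χ i/mu) ^ r = 1 := by
      have : ∀ i ∈ s, (χ i/mu) ^ r = χ i ^ r / mu ^ r := fun i hi =>
        Real.div_rpow (hχ i hi) hmu.le r
      rw [Finset.sum_congr rfl this, ← Finset.sum_div, hmur, ← hD_def,
        div_self hD0.ne']
    rw [e1, e2, e3]
    field_simp
  rw [hLHS] at hsum
  exact hsum


def cube (d : ℕ) : Finset (Fin d → ℤ) := Fintype.piFinset (fun _ => ({0,1} : Finset ℤ))

def cube3 (d : ℕ) : Finset (Fin d → ℤ) := Fintype.piFinset (fun _ => ({0,1,2} : Finset ℤ))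

noncomputable def conv (d : ℕ) (f g : (Fin d → ℤ) → ℝ) (m : Fin d → ℤ) : ℝ :=
  ∑ u ∈ cube d, f u * g (m - u)

lemma conv_nonneg {d : ℕ} {f g : (Fin d → ℤ) → ℝ} (hf : ∀ x, 0 ≤ f x) (hg : ∀ x, 0 ≤ g x)
    (m : Fin d → ℤ) : 0 ≤ conv d f g m :=
  Finset.sum_nonneg fun u _ => mul_nonneg (hf u) (hg _)

lemma sum_split {d : ℕ} (S : Finset ℤ) (F : (Fin (d+1) → ℤ) → ℝ) :
    ∑ x ∈ Fintype.piFinset (fun _ : Fin (d+1) => S), F x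
      = ∑ i ∈ S, ∑ y ∈ Fintype.piFinset (fun _ : Fin d => S), F (Fin.cons i y) := by
  rw [← Finset.sum_product']
  apply Finset.sum_nbij' (i := fun x => (x 0, Fin.tail x))
    (j := fun pr => Fin.cons pr.1 pr.2)
  · intro a ha
    rw [Finset.mem_product]
    rw [Fintype.mem_piFinset] at ha
    constructor
    · exact ha 0
    · rw [Fintype.mem_piFinset]; intro i; exact ha i.succ
  · intro pr hpr
    rw [Finset.mem_product] at hpr
    rw [Fintype.mem_piFinset]
    intro i
    induction i using Fin.cases with
    | zero => rw [Fin.cons_zero]; exact hpr.1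
    | succ j =>
      rw [Fin.cons_succ]
      have := hpr.2
      rw [Fintype.mem_piFinset] at this
      exact this j
  · intro a _; exact Fin.cons_self_tail a
  · intro pr _
    simp [Fin.cons_zero, Fin.tail_cons]
  · intro a _
    rw [Fin.cons_self_tail a]

lemma cons_sub_cons {d : ℕ} (k i : ℤ) (z y : Fin d → ℤ) :
    (Fin.cons k z - Fin.cons i y : Fin (d+1) → ℤ) = Fin.cons (k - i) (z - y) := by
  funext j
  induction j using Fin.cases with
  | zero => simp
  | succ j => simp

lemma cons_mem_piFinset {d : ℕ} (S : Finset ℤ) (i : ℤ) (y : Fin d → ℤ) :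
    Fin.cons i y ∈ Fintype.piFinset (fun _ : Fin (d+1) => S)
      ↔ i ∈ S ∧ y ∈ Fintype.piFinset (fun _ : Fin d => S) := by
  rw [Fin.mem_piFinset_iff_zero_tail]
  simp [Fin.tail_cons, Fin.tail]

lemma conv_succ {d : ℕ} (f g : (Fin (d+1) → ℤ) → ℝ) (k : ℤ) (z : Fin d → ℤ) :
    conv (d+1) f g (Fin.cons k z)
      = ∑ i ∈ ({0,1} : Finset ℤ),
          conv d (fun y => f (Fin.cons i y)) (fun y => g (Fin.cons (k-i) y)) z := by
  show ∑ u ∈ cube (d+1), f u * g (Fin.cons k z - u) = _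
  rw [show cube (d+1) = Fintype.piFinset (fun _ : Fin (d+1) => ({0,1} : Finset ℤ)) from rfl,
    sum_split]
  apply Finset.sum_congr rfl
  intro i _
  apply Finset.sum_congr rfl
  intro y _
  rw [cons_sub_cons]


lemma conv_zero_right {d : ℕ} (A B : (Fin d → ℤ) → ℝ) (hB : ∀ w, B w = 0) (z : Fin d → ℤ) :
    conv d A B z = 0 :=
  Finset.sum_eq_zero fun u _ => by rw [hB, mul_zero]

set_option maxHeartbeats 1600000 in
theorem core (r p q : ℝ) (hr0 : 0 < r) (hr1 : r < 1) (hp0 : 0 < p) (hq : q = r/p)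
    (hqb1 : 1 ≤ 2*q) (hqb2 : 2*q ≤ 2) (h2q : (2:ℝ) ^ (2*q) = 2 + 2 ^ r) :
    ∀ d (f g : (Fin d → ℤ) → ℝ), (∀ x, 0 ≤ f x) → (∀ x, 0 ≤ g x) →
      (∀ x, x ∉ cube d → f x = 0) → (∀ x, x ∉ cube d → g x = 0) →
      ((∑ u ∈ cube d, f u ^ p) * (∑ v ∈ cube d, g v ^ p)) ^ q
        ≤ ∑ m ∈ cube3 d, conv d f g m ^ r := by
  have hq0 : 0 < q := by rw [hq]; positivity
  have ppow : ∀ z : ℝ, 0 ≤ z → (z ^ p) ^ (q:ℝ) = z ^ r := by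
    intro z hz
    rw [← Real.rpow_mul hz, hq]; congr 1; field_simp
  intro d
  induction d with
  | zero =>
    intro f g hf0 hg0 _ _
    have e0 : ∀ (x : Fin 0 → ℤ), x = (fun i => i.elim0) := fun x => funext (fun i => i.elim0)
    have hcube : cube 0 = {(fun i => i.elim0 : Fin 0 → ℤ)} := by
      apply Finset.eq_singleton_iff_unique_mem.mpr
      constructor
      · rw [cube, Fintype.mem_piFinset]; intro i; exact i.elim0
      · intro x _; exact e0 x
    have hcube3 : cube3 0 = {(fun i => i.elim0 : Fin 0 → ℤ)} := by
      apply Finset.eq_singleton_iff_unique_mem.mpr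
      constructor
      · rw [cube3, Fintype.mem_piFinset]; intro i; exact i.elim0
      · intro x _; exact e0 x
    rw [hcube, hcube3, Finset.sum_singleton, Finset.sum_singleton, Finset.sum_singleton]
    have hconv : conv 0 f g (fun i => i.elim0) = f (fun i => i.elim0) * g (fun i => i.elim0) := by
      show ∑ u ∈ cube 0, f u * g ((fun (i : Fin 0) => i.elim0) - u) = _
      rw [hcube, Finset.sum_singleton]
      have hd : ((fun (i : Fin 0) => i.elim0) - (fun (i : Fin 0) => i.elim0) : Fin 0 → ℤ)
          = (fun (i : Fin 0) => i.elim0) := funext fun i => i.elim0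
      rw [hd]
    rw [hconv, ← Real.mul_rpow (hf0 _) (hg0 _), ppow _ (mul_nonneg (hf0 _) (hg0 _))]
  | succ d ih =>
    intro f g hf0 hg0 hfs hgs
    have h01 : (0:ℤ) ≠ 1 := by norm_num
    -- bad slices vanish
    have hbadg : ∀ (j : ℤ), j ∉ ({0,1} : Finset ℤ) → ∀ w, g (Fin.cons j w) = 0 := by
      intro j hj w
      apply hgs
      intro hmem
      exact hj ((cons_mem_piFinset _ j w).mp hmem).1
    -- the IH applied to slices
    have key : ∀ (i j : ℤ),
        ((∑ y ∈ cube d, f (Fin.cons i y) ^ p) * (∑ y ∈ cube d, g (Fin.cons j y) ^ p)) ^ q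
          ≤ ∑ z ∈ cube3 d, conv d (fun y => f (Fin.cons i y)) (fun y => g (Fin.cons j y)) z ^ r := by
      intro i j
      exact ih (fun y => f (Fin.cons i y)) (fun y => g (Fin.cons j y))
        (fun y => hf0 _) (fun y => hg0 _)
        (fun y hy => hfs _ (fun hmem => hy ((cons_mem_piFinset _ i y).mp hmem).2))
        (fun y hy => hgs _ (fun hmem => hy ((cons_mem_piFinset _ j y).mp hmem).2))
    -- decompositions of the convolution at the three levels
    have hdec0 : ∀ z, conv (d+1) f g (Fin.cons 0 z)
        = conv d (fun y => f (Fin.cons 0 y)) (fun y => g (Fin.cons 0 y)) z := by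
      intro z
      rw [conv_succ, Finset.sum_pair h01]
      norm_num
      rw [conv_zero_right _ _ (fun w => hbadg (-1) (by norm_num) w)]
    have hdec1 : ∀ z, conv (d+1) f g (Fin.cons 1 z)
        = conv d (fun y => f (Fin.cons 0 y)) (fun y => g (Fin.cons 1 y)) z
          + conv d (fun y => f (Fin.cons 1 y)) (fun y => g (Fin.cons 0 y)) z := by
      intro z
      rw [conv_succ, Finset.sum_pair h01]
      norm_num
    have hdec2 : ∀ z, conv (d+1) f g (Fin.cons 2 z)
        = conv d (fun y => f (Fin.cons 1 y)) (fun y => g (Fin.cons 1 y)) z := by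
      intro z
      rw [conv_succ, Finset.sum_pair h01]
      norm_num
      rw [conv_zero_right _ _ (fun w => hbadg 2 (by norm_num) w)]
    -- sums of pth powers split
    have hSPf : ∑ u ∈ cube (d+1), f u ^ p
        = (∑ y ∈ cube d, f (Fin.cons 0 y) ^ p) + (∑ y ∈ cube d, f (Fin.cons 1 y) ^ p) := by
      have h := sum_split ({0,1} : Finset ℤ) (fun u => f u ^ p)
      rw [Finset.sum_pair h01] at h
      exact h
    have hSPg : ∑ u ∈ cube (d+1), g u ^ p
        = (∑ y ∈ cube d, g (Fin.cons 0 y) ^ p) + (∑ y ∈ cube d, g (Fin.cons 1 y) ^ p) := by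
      have h := sum_split ({0,1} : Finset ℤ) (fun u => g u ^ p)
      rw [Finset.sum_pair h01] at h
      exact h
    have hRHS : ∑ m ∈ cube3 (d+1), conv (d+1) f g m ^ r
        = (∑ z ∈ cube3 d, conv (d+1) f g (Fin.cons 0 z) ^ r)
          + (∑ z ∈ cube3 d, conv (d+1) f g (Fin.cons 1 z) ^ r)
          + (∑ z ∈ cube3 d, conv (d+1) f g (Fin.cons 2 z) ^ r) := by
      have h := sum_split ({0,1,2} : Finset ℤ) (fun m => conv (d+1) f g m ^ r)
      rw [Finset.sum_insert (by norm_num : (0:ℤ) ∉ ({1,2} : Finset ℤ)),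
        Finset.sum_insert (by norm_num : (1:ℤ) ∉ ({2} : Finset ℤ)),
        Finset.sum_singleton] at h
      exact h.trans (add_assoc _ _ _).symm
    -- abbreviations
    set A0 := ∑ y ∈ cube d, f (Fin.cons 0 y) ^ p with hA0d
    set A1 := ∑ y ∈ cube d, f (Fin.cons 1 y) ^ p with hA1d
    set B0 := ∑ y ∈ cube d, g (Fin.cons 0 y) ^ p with hB0d
    set B1 := ∑ y ∈ cube d, g (Fin.cons 1 y) ^ p with hB1d
    have hA0n : 0 ≤ A0 := Finset.sum_nonneg fun y _ => Real.rpow_nonneg (hf0 _) p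
    have hA1n : 0 ≤ A1 := Finset.sum_nonneg fun y _ => Real.rpow_nonneg (hf0 _) p
    have hB0n : 0 ≤ B0 := Finset.sum_nonneg fun y _ => Real.rpow_nonneg (hg0 _) p
    have hB1n : 0 ≤ B1 := Finset.sum_nonneg fun y _ => Real.rpow_nonneg (hg0 _) p
    have invp : ∀ z : ℝ, 0 ≤ z → (z ^ (1/p : ℝ)) ^ p = z := by
      intro z hz
      rw [← Real.rpow_mul hz, show (1/p)*p = 1 by field_simp, Real.rpow_one]
    have invr : ∀ z : ℝ, 0 ≤ z → (z ^ (1/p : ℝ)) ^ r = z ^ q := by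
      intro z hz
      rw [← Real.rpow_mul hz, hq]; congr 1; field_simp
    have hq1r : ∀ z : ℝ, 0 ≤ z → (z ^ (q : ℝ)) ^ (1/r : ℝ) = z ^ (1/p : ℝ) := by
      intro z hz
      rw [← Real.rpow_mul hz, hq]; congr 1; field_simp
    have ha0n : 0 ≤ A0 ^ (1/p : ℝ) := Real.rpow_nonneg hA0n _
    have ha1n : 0 ≤ A1 ^ (1/p : ℝ) := Real.rpow_nonneg hA1n _
    have hb0n : 0 ≤ B0 ^ (1/p : ℝ) := Real.rpow_nonneg hB0n _
    have hb1n : 0 ≤ B1 ^ (1/p : ℝ) := Real.rpow_nonneg hB1n _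
    -- three partial bounds
    have hS0 : (A0 ^ (1/p : ℝ) * B0 ^ (1/p : ℝ)) ^ r
        ≤ ∑ z ∈ cube3 d, conv (d+1) f g (Fin.cons 0 z) ^ r := by
      have e : (A0 ^ (1/p : ℝ) * B0 ^ (1/p : ℝ)) ^ r = (A0*B0) ^ q := by
        rw [Real.mul_rpow ha0n hb0n, invr _ hA0n, invr _ hB0n, ← Real.mul_rpow hA0n hB0n]
      rw [e]
      calc (A0*B0) ^ q ≤ _ := key 0 0
        _ = ∑ z ∈ cube3 d, conv (d+1) f g (Fin.cons 0 z) ^ r :=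
          Finset.sum_congr rfl fun z _ => by rw [hdec0 z]
    have hS2 : (A1 ^ (1/p : ℝ) * B1 ^ (1/p : ℝ)) ^ r
        ≤ ∑ z ∈ cube3 d, conv (d+1) f g (Fin.cons 2 z) ^ r := by
      have e : (A1 ^ (1/p : ℝ) * B1 ^ (1/p : ℝ)) ^ r = (A1*B1) ^ q := by
        rw [Real.mul_rpow ha1n hb1n, invr _ hA1n, invr _ hB1n, ← Real.mul_rpow hA1n hB1n]
      rw [e]
      calc (A1*B1) ^ q ≤ _ := key 1 1
        _ = ∑ z ∈ cube3 d, conv (d+1) f g (Fin.cons 2 z) ^ r :=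
          Finset.sum_congr rfl fun z _ => by rw [hdec2 z]
    have hS1 : (A0 ^ (1/p : ℝ) * B1 ^ (1/p : ℝ) + A1 ^ (1/p : ℝ) * B0 ^ (1/p : ℝ)) ^ r
        ≤ ∑ z ∈ cube3 d, conv (d+1) f g (Fin.cons 1 z) ^ r := by
      have hφn : ∀ z ∈ cube3 d, 0 ≤ conv d (fun y => f (Fin.cons 0 y)) (fun y => g (Fin.cons 1 y)) z :=
        fun z _ => conv_nonneg (fun y => hf0 _) (fun y => hg0 _) z
      have hχn : ∀ z ∈ cube3 d, 0 ≤ conv d (fun y => f (Fin.cons 1 y)) (fun y => g (Fin.cons 0 y)) z :=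
        fun z _ => conv_nonneg (fun y => hf0 _) (fun y => hg0 _) z
      have hmink := rev_mink (cube3 d) hr0 hr1 _ _ hφn hχn
      have hT01 : A0 ^ (1/p : ℝ) * B1 ^ (1/p : ℝ)
          ≤ (∑ z ∈ cube3 d, conv d (fun y => f (Fin.cons 0 y)) (fun y => g (Fin.cons 1 y)) z ^ r) ^ (1/r : ℝ) := by
        have h := Real.rpow_le_rpow (Real.rpow_nonneg (mul_nonneg hA0n hB1n) q) (key 0 1)
          (by positivity : (0:ℝ) ≤ 1/r)
        rw [hq1r _ (mul_nonneg hA0n hB1n), Real.mul_rpow hA0n hB1n] at h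
        exact h
      have hT10 : A1 ^ (1/p : ℝ) * B0 ^ (1/p : ℝ)
          ≤ (∑ z ∈ cube3 d, conv d (fun y => f (Fin.cons 1 y)) (fun y => g (Fin.cons 0 y)) z ^ r) ^ (1/r : ℝ) := by
        have h := Real.rpow_le_rpow (Real.rpow_nonneg (mul_nonneg hA1n hB0n) q) (key 1 0)
          (by positivity : (0:ℝ) ≤ 1/r)
        rw [hq1r _ (mul_nonneg hA1n hB0n), Real.mul_rpow hA1n hB0n] at h
        exact h
      calc (A0 ^ (1/p : ℝ) * B1 ^ (1/p : ℝ) + A1 ^ (1/p : ℝ) * B0 ^ (1/p : ℝ)) ^ r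
          ≤ ((∑ z ∈ cube3 d, conv d (fun y => f (Fin.cons 0 y)) (fun y => g (Fin.cons 1 y)) z ^ r) ^ (1/r : ℝ)
            + (∑ z ∈ cube3 d, conv d (fun y => f (Fin.cons 1 y)) (fun y => g (Fin.cons 0 y)) z ^ r) ^ (1/r : ℝ)) ^ r := by
            apply Real.rpow_le_rpow (by positivity) (add_le_add hT01 hT10) hr0.le
        _ ≤ ∑ z ∈ cube3 d, (conv d (fun y => f (Fin.cons 0 y)) (fun y => g (Fin.cons 1 y)) z
              + conv d (fun y => f (Fin.cons 1 y)) (fun y => g (Fin.cons 0 y)) z) ^ r := hmink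
        _ = ∑ z ∈ cube3 d, conv (d+1) f g (Fin.cons 1 z) ^ r :=
          (Finset.sum_congr rfl fun z _ => by rw [hdec1 z]).symm
    -- final assembly
    have htp := two_point (a0 := A0 ^ (1/p : ℝ)) (a1 := A1 ^ (1/p : ℝ))
      (b0 := B0 ^ (1/p : ℝ)) (b1 := B1 ^ (1/p : ℝ)) hr0 hr1 hp0 hq hqb1 hqb2 h2q
      ha0n ha1n hb0n hb1n
    rw [invp _ hA0n, invp _ hA1n, invp _ hB0n, invp _ hB1n] at htp
    calc ((∑ u ∈ cube (d+1), f u ^ p) * (∑ v ∈ cube (d+1), g v ^ p)) ^ q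
        = ((A0 + A1) * (B0 + B1)) ^ q := by rw [hSPf, hSPg]
      _ ≤ (A0 ^ (1/p : ℝ) * B0 ^ (1/p : ℝ)) ^ r
          + (A0 ^ (1/p : ℝ) * B1 ^ (1/p : ℝ) + A1 ^ (1/p : ℝ) * B0 ^ (1/p : ℝ)) ^ r
          + (A1 ^ (1/p : ℝ) * B1 ^ (1/p : ℝ)) ^ r := htp
      _ ≤ (∑ z ∈ cube3 d, conv (d+1) f g (Fin.cons 0 z) ^ r)
          + (∑ z ∈ cube3 d, conv (d+1) f g (Fin.cons 1 z) ^ r)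
          + (∑ z ∈ cube3 d, conv (d+1) f g (Fin.cons 2 z) ^ r) :=
          add_le_add (add_le_add hS0 hS1) hS2
      _ = ∑ m ∈ cube3 (d+1), conv (d+1) f g m ^ r := hRHS.symm


lemma mem_cube_iff {d : ℕ} (x : Fin d → ℤ) : x ∈ cube d ↔ InCube x := by
  simp [cube, Fintype.mem_piFinset, InCube]


end RY

open RY

theorem reverse_young_hypercube_diagonal (d : ℕ) (hd : 1 ≤ d) (r : ℝ)
    (hr0 : 0 < r) (hr1 : r < 1)
    (f g : (Fin d → ℤ) → ℝ) (hf0 : ∀ x, 0 ≤ f x) (hg0 : ∀ x, 0 ≤ g x)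
    (hf : SupportedInCube f) (hg : SupportedInCube g) :
    lnorm (2 * r / Real.logb 2 (2 + 2 ^ r)) f *
        lnorm (2 * r / Real.logb 2 (2 + 2 ^ r)) g ≤
      lnorm r (cconv f g) := by
  -- parameter facts
  have h2r1 : (1:ℝ) < 2 ^ r := by
    have h := Real.rpow_lt_rpow_of_exponent_lt (by norm_num : (1:ℝ) < 2) hr0
    rwa [Real.rpow_zero] at h
  have h2r2 : (2:ℝ) ^ r < 2 := by
    have h := Real.rpow_lt_rpow_of_exponent_lt (by norm_num : (1:ℝ) < 2) hr1
    rwa [Real.rpow_one] at h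
  set L := Real.logb 2 (2 + 2 ^ r) with hL_def
  have hLgt1 : 1 < L := by
    have h := Real.logb_lt_logb (by norm_num : (1:ℝ) < 2) (by norm_num : (0:ℝ) < 2)
      (by linarith : (2:ℝ) < 2 + 2 ^ r)
    rwa [Real.logb_self_eq_one (by norm_num : (1:ℝ) < 2)] at h
  have hLlt2 : L < 2 := by
    have h4 : (2:ℝ) ^ (2:ℝ) = 4 := by
      have := Real.rpow_natCast (2:ℝ) 2
      norm_num at this
      linarith [this]
    have h := Real.logb_lt_logb (by norm_num : (1:ℝ) < 2)
      (by positivity : (0:ℝ) < 2 + 2 ^ r) (by linarith : (2:ℝ) + 2 ^ r < 4)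
    rwa [show (4:ℝ) = (2:ℝ) ^ (2:ℝ) from h4.symm,
      Real.logb_rpow (b := 2) (by norm_num) (by norm_num)] at h
  have hL0 : 0 < L := by linarith
  set p := 2 * r / L with hp_def
  have hp0 : 0 < p := div_pos (by linarith) hL0
  set q := r / p with hq_def
  have h2qL : 2 * q = L := by
    rw [hq_def, hp_def]
    field_simp
  have hqb1 : 1 ≤ 2*q := by rw [h2qL]; linarith
  have hqb2 : 2*q ≤ 2 := by rw [h2qL]; linarith
  have h2q : (2:ℝ) ^ (2*q) = 2 + 2 ^ r := by
    rw [h2qL, hL_def]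
    exact Real.rpow_logb (b := 2) (by norm_num) (by norm_num) (by positivity)
  -- support in finset form
  have hfs : ∀ x, x ∉ cube d → f x = 0 := fun x hx =>
    hf x (fun hin => hx ((mem_cube_iff x).mpr hin))
  have hgs : ∀ x, x ∉ cube d → g x = 0 := fun x hx =>
    hg x (fun hin => hx ((mem_cube_iff x).mpr hin))
  -- cconv = conv
  have hcc : ∀ m, cconv f g m = conv d f g m := by
    intro m
    exact tsum_eq_sum (fun u hu => by rw [hfs u hu, zero_mul])
  -- conv vanishes off cube3
  have hconv3 : ∀ m, m ∉ cube3 d → conv d f g m = 0 := by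
    intro m hm
    apply Finset.sum_eq_zero
    intro u hu
    have hgz : g (m - u) = 0 := by
      apply hgs
      intro hmem
      apply hm
      rw [cube3, Fintype.mem_piFinset]
      intro j
      have h1 := (Fintype.mem_piFinset.mp hmem) j
      have h2 := (Fintype.mem_piFinset.mp hu) j
      simp only [Finset.mem_insert, Finset.mem_singleton] at h1 h2 ⊢
      have hsub : (m - u) j = m j - u j := rfl
      rw [hsub] at h1
      omega
    rw [hgz, mul_zero]
  -- norms as finite sums
  have hSPf : (∑' x : Fin d → ℤ, |f x| ^ p) = ∑ x ∈ cube d, f x ^ p := by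
    rw [tsum_eq_sum (s := cube d) (fun x hx => by
      rw [hfs x hx, abs_zero, Real.zero_rpow hp0.ne'])]
    exact Finset.sum_congr rfl fun x _ => by rw [abs_of_nonneg (hf0 x)]
  have hSPg : (∑' x : Fin d → ℤ, |g x| ^ p) = ∑ x ∈ cube d, g x ^ p := by
    rw [tsum_eq_sum (s := cube d) (fun x hx => by
      rw [hgs x hx, abs_zero, Real.zero_rpow hp0.ne'])]
    exact Finset.sum_congr rfl fun x _ => by rw [abs_of_nonneg (hg0 x)]
  have hSC : (∑' m : Fin d → ℤ, |cconv f g m| ^ r) = ∑ m ∈ cube3 d, conv d f g m ^ r := by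
    rw [tsum_eq_sum (s := cube3 d) (fun m hm => by
      rw [hcc m, hconv3 m hm, abs_zero, Real.zero_rpow hr0.ne'])]
    exact Finset.sum_congr rfl fun m _ => by
      rw [hcc m, abs_of_nonneg (conv_nonneg hf0 hg0 m)]
  have hAn : 0 ≤ ∑ x ∈ cube d, f x ^ p := Finset.sum_nonneg fun x _ => Real.rpow_nonneg (hf0 x) p
  have hBn : 0 ≤ ∑ x ∈ cube d, g x ^ p := Finset.sum_nonneg fun x _ => Real.rpow_nonneg (hg0 x) p
  have hcore := core r p q hr0 hr1 hp0 hq_def hqb1 hqb2 h2q d f g hf0 hg0 hfs hgs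
  -- raise to 1/r
  have hfinal := Real.rpow_le_rpow (Real.rpow_nonneg (mul_nonneg hAn hBn) q) hcore
    (by positivity : (0:ℝ) ≤ 1/r)
  have hqr : (((∑ x ∈ cube d, f x ^ p) * (∑ x ∈ cube d, g x ^ p)) ^ (q:ℝ)) ^ (1/r : ℝ)
      = ((∑ x ∈ cube d, f x ^ p) * (∑ x ∈ cube d, g x ^ p)) ^ (1/p : ℝ) := by
    rw [← Real.rpow_mul (mul_nonneg hAn hBn)]
    congr 1
    rw [hq_def]; field_simp
  rw [hqr] at hfinal
  -- identify both sides
  show lnorm p f * lnorm p g ≤ lnorm r (cconv f g)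
  rw [lnorm, lnorm, lnorm, hSPf, hSPg, hSC,
    ← Real.mul_rpow hAn hBn]
  exact hfinal
end

section
/- Let 0 < r < 1 and p > 0, and suppose that for every d ≥ 1 and all functions f, g : ℤ^d → [0,∞) supported in {0,1}^d one has ‖f*g‖_{ℓ^r(ℤ^d)} ≥ ‖f‖_{ℓ^p(ℤ^d)} ‖g‖_{ℓ^p(ℤ^d)}. Then p ≥ 2r / log₂(2 + 2^r). -/
open scoped BigOperators ENNReal

lemma tsum_fin1 (F : (Fin 1 → ℤ) → ℝ) :
    ∑' x : Fin 1 → ℤ, F x = ∑' n : ℤ, F (fun _ => n) := by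
  exact ((Equiv.funUnique (Fin 1) ℤ).symm.tsum_eq F).symm

lemma eta_fin1 (x : Fin 1 → ℤ) : x = fun _ => x 0 := by
  funext i
  rw [Subsingleton.elim i 0]

theorem reverse_young_hypercube_diagonal_sharp (r p : ℝ)
    (hr0 : 0 < r) (hr1 : r < 1) (hp : 0 < p)
    (h : ∀ d : ℕ, 1 ≤ d → ∀ f g : (Fin d → ℤ) → ℝ,
      (∀ x, 0 ≤ f x) → (∀ x, 0 ≤ g x) →
        SupportedInCube f → SupportedInCube g →
          lnorm p f * lnorm p g ≤ lnorm r (cconv f g)) :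
    2 * r / Real.logb 2 (2 + 2 ^ r) ≤ p := by
  set f : (Fin 1 → ℤ) → ℝ := fun x => if x 0 = 0 ∨ x 0 = 1 then 1 else 0 with hfdef
  have hf0 : ∀ x, 0 ≤ f x := by
    intro x; simp only [hfdef]; split_ifs <;> norm_num
  have hfs : SupportedInCube f := by
    intro x hx
    simp only [hfdef, ite_eq_right_iff]
    intro hx0
    exact absurd (fun i => by rw [Subsingleton.elim i 0]; exact hx0) hx
  -- value of f at constant functions
  have hfval : ∀ n : ℤ, f (fun _ => n) = if n = 0 ∨ n = 1 then 1 else 0 := by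
    intro n; simp [hfdef]
  -- lnorm p f = 2^(1/p)
  have hnorm : ∀ s : ℝ, 0 < s → lnorm s f = (2 : ℝ) ^ (1 / s) := by
    intro s hs
    unfold lnorm
    congr 1
    rw [tsum_fin1]
    rw [tsum_eq_sum (s := ({0, 1} : Finset ℤ)) ?_]
    · norm_num [hfval]
    · intro n hn
      simp only [Finset.mem_insert, Finset.mem_singleton, not_or] at hn
      rw [hfval]
      simp [hn.1, hn.2, Real.zero_rpow hs.ne']
  -- the convolution
  have hconv : ∀ m : Fin 1 → ℤ, cconv f f m = f m + f (m - fun _ => 1) := by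
    intro m
    unfold cconv
    rw [tsum_eq_sum (s := ({(fun _ => 0), (fun _ => 1)} : Finset (Fin 1 → ℤ))) ?_]
    · rw [Finset.sum_pair (by intro hcc; have := congrFun hcc 0; norm_num at this)]
      have h0 : f (fun _ => (0:ℤ)) = 1 := by rw [hfval]; norm_num
      have h1 : f (fun _ => (1:ℤ)) = 1 := by rw [hfval]; norm_num
      have hm0 : m - (fun _ => (0:ℤ)) = m := by funext i; simp
      rw [h0, h1, one_mul, one_mul, hm0]
    · intro u hu
      simp only [Finset.mem_insert, Finset.mem_singleton, not_or] at hu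
      have : f u = 0 := by
        rw [eta_fin1 u, hfval]
        rw [if_neg]
        rintro (h0 | h1)
        · exact hu.1 (by rw [eta_fin1 u, h0])
        · exact hu.2 (by rw [eta_fin1 u, h1])
      rw [this, zero_mul]
  have hconvval : ∀ n : ℤ, cconv f f (fun _ => n) =
      if n = 0 then 1 else if n = 1 then 2 else if n = 2 then 1 else 0 := by
    intro n
    rw [hconv]
    have : ((fun _ => n) - fun _ => (1:ℤ)) = (fun _ => n - 1 : Fin 1 → ℤ) := rfl
    rw [this, hfval, hfval]
    split_ifs <;> first | omega | norm_num
  -- lnorm r (cconv f f) = (2 + 2^r)^(1/r)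
  have hnormc : lnorm r (cconv f f) = (2 + 2 ^ r) ^ (1 / r) := by
    unfold lnorm
    congr 1
    rw [tsum_fin1]
    rw [tsum_eq_sum (s := ({0, 1, 2} : Finset ℤ)) ?_]
    · rw [Finset.sum_insert (by norm_num), Finset.sum_insert (by norm_num),
        Finset.sum_singleton, hconvval 0, hconvval 1, hconvval 2]
      norm_num
      ring
    · intro n hn
      simp only [Finset.mem_insert, Finset.mem_singleton, not_or] at hn
      rw [hconvval]
      simp [hn.1, hn.2.1, hn.2.2, Real.zero_rpow hr0.ne']
  have key := h 1 le_rfl f f hf0 hf0 hfs hfs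
  rw [hnorm p hp, hnormc] at key
  -- now pure arithmetic
  have h2 : (1:ℝ) < 2 := one_lt_two
  have hbase : (1:ℝ) < 2 + 2 ^ r := by
    have : (0:ℝ) < 2 ^ r := Real.rpow_pos_of_pos two_pos r
    linarith
  have hL : 0 < Real.logb 2 (2 + 2 ^ r) := Real.logb_pos h2 hbase
  have key2 : (2:ℝ) ^ (2 / p) ≤ (2 + 2 ^ r) ^ (1 / r) := by
    calc (2:ℝ) ^ (2 / p) = 2 ^ (1/p) * 2 ^ (1/p) := by
          rw [← Real.rpow_add two_pos]; ring_nf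
      _ ≤ _ := key
  have key3 : 2 / p ≤ (1 / r) * Real.logb 2 (2 + 2 ^ r) := by
    have hmono := Real.logb_le_logb_of_le h2 (by positivity : (0:ℝ) < 2 ^ (2/p)) key2
    rwa [Real.logb_rpow two_pos (by norm_num),
      Real.logb_rpow_eq_mul_logb_of_pos (by linarith : (0:ℝ) < 2 + 2 ^ r)] at hmono
  rw [one_div, inv_mul_eq_div] at key3
  rw [div_le_div_iff₀ hp hr0] at key3
  rw [div_le_iff₀ hL]
  linarith
end

section
/- Let d ≥ 1 and let f, g : ℤ^d → [0,∞) be supported in {0,1}^d. Then ∑_{m ∈ ℤ^d} (f ⊛ g)(m) ≥ (∑_{u ∈ ℤ^d} f(u)^{2/log₂ 3})^{(log₂ 3)/2} · (∑_{v ∈ ℤ^d} g(v)^{2/log₂ 3})^{(log₂ 3)/2}, where (f ⊛ g)(m) := sup_{u+v=m} f(u)g(v) is the sup-convolution. -/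
open scoped BigOperators ENNReal

/-- The sup-convolution `(f ⊛ g)(m) = sup_{u+v=m} f(u) g(v)`. -/
noncomputable def supConv {d : ℕ} (f g : (Fin d → ℤ) → ℝ) : (Fin d → ℤ) → ℝ :=
  fun m => ⨆ u : Fin d → ℤ, f u * g (m - u)

/-!
The exponent `p = 2 / log₂ 3` is the one with `3 ^ (p / 2) = 2`, i.e. `4 ^ (1 / p) = 3`.

The inequality tensorizes: for functions on `G × H` supported in `s ×ˢ t`, apply the
inequality on `s` to the `ℓ^p` norms of the fibres over `G`, and the inequality on `t` to each
pair of fibres; a supremum of sums is at most the sum of the suprema. As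
`{0,1}^(d+1) ≅ {0,1} × {0,1}^d`, everything reduces to `d = 1`, which is the four-variable
inequality
`‖(a, b)‖_p ‖(c, d)‖_p ≤ a c + max (a d) (b c) + b d` (equality at `a = b = c = d`).
Dehomogenized, it says `(1 + β^p)(1 + γ^p) ≤ (1 + β + γ)^p` for `β γ ≤ 1`. As a function of
`γ` the difference of the two sides first increases and then decreases, so it suffices to check
`γ = 0` (superadditivity of `t ↦ t^p`) and `γ = 1/β`, that is
`(t^p + 1)^2 ≤ (t^2 + t + 1)^p`, a one-variable inequality proved by studying derivatives.
-/

open Real Set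

lemma le_of_hasDerivAt_nonneg {f f' : ℝ → ℝ} {a x : ℝ} (hax : a ≤ x)
    (hf : ∀ y ∈ Icc a x, HasDerivAt f (f' y) y) (hf' : ∀ y ∈ Ioo a x, 0 ≤ f' y) :
    f a ≤ f x :=
  monotoneOn_of_hasDerivWithinAt_nonneg (convex_Icc a x)
    (fun y hy => (hf y hy).continuousAt.continuousWithinAt)
    (fun y hy => (hf y (interior_subset hy)).hasDerivWithinAt)
    (fun y hy => hf' y (by rwa [interior_Icc] at hy)) (left_mem_Icc.2 hax)
    (right_mem_Icc.2 hax) hax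

lemma le_of_hasDerivAt_nonpos {f f' : ℝ → ℝ} {x b : ℝ} (hxb : x ≤ b)
    (hf : ∀ y ∈ Icc x b, HasDerivAt f (f' y) y) (hf' : ∀ y ∈ Ioo x b, f' y ≤ 0) :
    f b ≤ f x :=
  antitoneOn_of_hasDerivWithinAt_nonpos (convex_Icc x b)
    (fun y hy => (hf y hy).continuousAt.continuousWithinAt)
    (fun y hy => (hf y (interior_subset hy)).hasDerivWithinAt)
    (fun y hy => hf' y (by rwa [interior_Icc] at hy)) (left_mem_Icc.2 hxb)
    (right_mem_Icc.2 hxb) hxb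

lemma min_le_of_hasDerivAt_of_sign {f f' : ℝ → ℝ} {a b c x : ℝ} (hx : x ∈ Icc a b)
    (hf : ∀ y ∈ Icc a b, HasDerivAt f (f' y) y)
    (hinc : ∀ y ∈ Ioo a b, y < c → 0 ≤ f' y) (hdec : ∀ y ∈ Ioo a b, c < y → f' y ≤ 0) :
    min (f a) (f b) ≤ f x := by
  obtain ⟨hax, hxb⟩ := hx
  rcases le_or_gt x c with hxc | hcx
  · exact min_le_of_left_le <| le_of_hasDerivAt_nonneg hax
      (fun y hy => hf y ⟨hy.1, hy.2.trans hxb⟩)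
      (fun y hy => hinc y ⟨hy.1, hy.2.trans_le hxb⟩ (hy.2.trans_le hxc))
  · exact min_le_of_right_le <| le_of_hasDerivAt_nonpos hxb
      (fun y hy => hf y ⟨hax.trans hy.1, hy.2⟩)
      (fun y hy => hdec y ⟨hax.trans_lt hy.1, hy.2⟩ (hcx.trans hy.1))

lemma mem_Ioo_of_three_rpow_half_eq_two {p : ℝ} (hp : (3 : ℝ) ^ (p / 2) = 2) :
    p ∈ Ioo 1 2 := by
  have hlow : (3 : ℝ) ^ ((1 : ℝ) / 2) < 3 ^ (p / 2) := by
    rw [hp, ← sqrt_eq_rpow, sqrt_lt' two_pos]; norm_num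
  have hup : (3 : ℝ) ^ (p / 2) < 3 ^ (1 : ℝ) := by rw [hp, rpow_one]; norm_num
  rw [rpow_lt_rpow_left_iff (by norm_num)] at hlow hup
  constructor <;> linarith

lemma ne_zero_of_three_rpow_half_eq_two {p : ℝ} (hp : (3 : ℝ) ^ (p / 2) = 2) : p ≠ 0 :=
  (zero_lt_one.trans (mem_Ioo_of_three_rpow_half_eq_two hp).1).ne'

lemma exists_roots_mul_one_add_add_sq_sub {r : ℝ} (hr : r ∈ Ioo 2 3) :
    ∃ y₁ y₂ : ℝ, y₁ ≤ y₂ ∧ 1 ≤ y₂ ∧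
      ∀ y, r * (1 + y + y ^ 2) - (2 + y) * (1 + 2 * y) = (r - 2) * (y - y₁) * (y - y₂) := by
  obtain ⟨hr2, hr3⟩ := hr
  set D := √(3 * (3 - r) * (1 + r))
  have hD : D ^ 2 = 3 * (3 - r) * (1 + r) := sq_sqrt (by nlinarith)
  have hD0 : 0 ≤ D := sqrt_nonneg _
  refine ⟨(5 - r - D) / (2 * (r - 2)), (5 - r + D) / (2 * (r - 2)),
    div_le_div_of_nonneg_right (by linarith) (by linarith),
    by rw [le_div_iff₀ (by linarith)]; linarith, fun y => ?_⟩
  have : r - 2 ≠ 0 := by linarith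
  field_simp
  linear_combination hD

lemma one_add_add_sq_le_one_add_half_rpow {r : ℝ} (hr : (3 / 2 : ℝ) ^ r = 3) {y : ℝ}
    (hy : y ∈ Icc (0 : ℝ) 1) : 1 + y + y ^ 2 ≤ (1 + y / 2) ^ r := by
  have hr2 : 2 < r := by
    have : (3 / 2 : ℝ) ^ (2 : ℝ) < (3 / 2) ^ r := by rw [hr]; norm_num
    exact (rpow_lt_rpow_left_iff (by norm_num)).1 this
  have hr3 : r < 3 := by
    have : (3 / 2 : ℝ) ^ r < (3 / 2) ^ (3 : ℝ) := by rw [hr]; norm_num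
    exact (rpow_lt_rpow_left_iff (by norm_num)).1 this
  obtain ⟨y₁, y₂, hy₁₂, hy₂, hQ⟩ := exists_roots_mul_one_add_add_sq_sub ⟨hr2, hr3⟩
  set G : ℝ → ℝ := fun y => r * log (1 + y / 2) - log (1 + y + y ^ 2)
  have hG : ∀ y ∈ Icc (0 : ℝ) 1, HasDerivAt G
      ((r - 2) * (y - y₁) * (y - y₂) / ((2 + y) * (1 + y + y ^ 2))) y := by
    rintro y ⟨hy0, -⟩
    have h1 : HasDerivAt (fun y : ℝ => 1 + y / 2) (1 / 2) y := by
      simpa using ((hasDerivAt_id y).div_const 2).const_add 1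
    have h2 : HasDerivAt (fun y : ℝ => 1 + y + y ^ 2) (1 + 2 * y) y := by
      simpa [add_assoc] using ((hasDerivAt_id y).add (hasDerivAt_pow 2 y)).const_add 1
    refine (((h1.log (by positivity)).const_mul r).sub
      (h2.log (by positivity))).congr_deriv ?_
    rw [← hQ]
    field_simp
  have hGy := min_le_of_hasDerivAt_of_sign (c := y₁) hy hG
    (fun y hy hyc => div_nonneg (mul_nonneg_of_nonpos_of_nonpos
      (mul_nonpos_of_nonneg_of_nonpos (by linarith) (by linarith)) (by linarith))
      (by nlinarith [hy.1]))
    (fun y hy hyc => div_nonpos_of_nonpos_of_nonneg (mul_nonpos_of_nonneg_of_nonpos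
      (mul_nonneg (by linarith) (by linarith)) (by linarith [hy.2])) (by nlinarith [hy.1]))
  have hG1 : G 1 = 0 := by
    have : r * log (3 / 2) = log 3 := by rw [← log_rpow (by norm_num), hr]
    norm_num [G, this]
  have hG0 : G 0 = 0 := by simp [G]
  rw [hG0, hG1, min_self] at hGy
  have hpos : 0 < 1 + y / 2 := by linarith [hy.1]
  rw [← log_le_log_iff (by nlinarith [hy.1]) (rpow_pos_of_pos hpos r), log_rpow hpos]
  linarith

lemma two_mul_rpow_mul_rpow_le {p : ℝ} (hp : (3 : ℝ) ^ (p / 2) = 2) {x : ℝ} (hx : 1 ≤ x) :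
    2 * x ^ (p - 1) * (x ^ 2 + x + 1) ^ ((2 - p) / 2) ≤ 2 * x + 1 := by
  obtain ⟨-, hp2⟩ := mem_Ioo_of_three_rpow_half_eq_two hp
  have hx0 : 0 < x := by linarith
  -- for `y = x⁻¹` the claim reads `(1 + y + y²) ^ (1 - p / 2) ≤ 1 + y / 2`
  have hr : (3 / 2 : ℝ) ^ (2 / (2 - p)) = 3 := by
    have h32 : (3 : ℝ) ^ ((2 - p) / 2) = 3 / 2 := by
      rw [show (2 - p) / 2 = 1 - p / 2 by ring, rpow_sub (by norm_num), rpow_one, hp]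
    rw [← h32, ← rpow_mul (by norm_num), div_mul_div_cancel₀ two_ne_zero,
      div_self (by linarith), rpow_one]
  have hy : x⁻¹ ∈ Icc (0 : ℝ) 1 := ⟨inv_nonneg.2 hx0.le, inv_le_one_of_one_le₀ hx⟩
  have hroot : (1 + x⁻¹ + x⁻¹ ^ 2) ^ ((2 - p) / 2) ≤ 1 + x⁻¹ / 2 := by
    calc (1 + x⁻¹ + x⁻¹ ^ 2) ^ ((2 - p) / 2)
        ≤ ((1 + x⁻¹ / 2) ^ (2 / (2 - p))) ^ ((2 - p) / 2) :=
          rpow_le_rpow (by positivity) (one_add_add_sq_le_one_add_half_rpow hr hy) (by linarith)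
      _ = 1 + x⁻¹ / 2 := by
          rw [← rpow_mul (by positivity), div_mul_div_cancel₀ (by linarith),
            div_self two_ne_zero, rpow_one]
  have hsplit : (x ^ 2 + x + 1) ^ ((2 - p) / 2) =
      x ^ (2 - p) * (1 + x⁻¹ + x⁻¹ ^ 2) ^ ((2 - p) / 2) := by
    rw [show x ^ 2 + x + 1 = x ^ 2 * (1 + x⁻¹ + x⁻¹ ^ 2) by field_simp,
      mul_rpow (by positivity) (by positivity), ← rpow_pow_comm hx0.le,
      ← rpow_mul_natCast hx0.le]
    norm_num
  calc 2 * x ^ (p - 1) * (x ^ 2 + x + 1) ^ ((2 - p) / 2)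
      = 2 * (x ^ (p - 1) * x ^ (2 - p)) * (1 + x⁻¹ + x⁻¹ ^ 2) ^ ((2 - p) / 2) := by
        rw [hsplit]; ring
    _ ≤ 2 * x * (1 + x⁻¹ / 2) := by
        rw [← rpow_add hx0, show p - 1 + (2 - p) = 1 by ring, rpow_one]
        gcongr
    _ = 2 * x + 1 := by field_simp

lemma rpow_add_one_le_rpow_half {p : ℝ} (hp : (3 : ℝ) ^ (p / 2) = 2) {x : ℝ} (hx : 1 ≤ x) :
    x ^ p + 1 ≤ (x ^ 2 + x + 1) ^ (p / 2) := by
  obtain ⟨hp1, -⟩ := mem_Ioo_of_three_rpow_half_eq_two hp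
  have hderiv : ∀ y ∈ Icc 1 x, HasDerivAt (fun y : ℝ => (y ^ 2 + y + 1) ^ (p / 2) - y ^ p)
      (p / 2 * (y ^ 2 + y + 1) ^ (p / 2 - 1) * (2 * y + 1) - p * y ^ (p - 1)) y := by
    rintro y ⟨hy, -⟩
    have hpoly : HasDerivAt (fun y : ℝ => y ^ 2 + y + 1) (2 * y + 1) y := by
      simpa using ((hasDerivAt_pow 2 y).add (hasDerivAt_id y)).add_const 1
    exact ((hpoly.rpow_const (p := p / 2) (Or.inl (by positivity))).sub
      (hasDerivAt_rpow_const (p := p) (Or.inl (by positivity)))).congr_deriv (by ring)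
  have hmono := le_of_hasDerivAt_nonneg hx hderiv fun y ⟨hy, _⟩ => by
    have hA : 0 < y ^ 2 + y + 1 := by positivity
    have hcancel : (y ^ 2 + y + 1) ^ (p / 2 - 1) * (y ^ 2 + y + 1) ^ ((2 - p) / 2) = 1 := by
      rw [← rpow_add hA, show p / 2 - 1 + (2 - p) / 2 = 0 by ring, rpow_zero]
    have := mul_le_mul_of_nonneg_left (two_mul_rpow_mul_rpow_le hp hy.le)
      (by positivity : 0 ≤ p / 2 * (y ^ 2 + y + 1) ^ (p / 2 - 1))
    linear_combination this - p * y ^ (p - 1) * hcancel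
  norm_num [hp] at hmono
  linarith

lemma sq_rpow_add_one_le {p : ℝ} (hp : (3 : ℝ) ^ (p / 2) = 2) {t : ℝ} (ht : 0 < t) :
    (t ^ p + 1) ^ 2 ≤ (t ^ 2 + t + 1) ^ p := by
  have key : ∀ x : ℝ, 1 ≤ x → (x ^ p + 1) ^ 2 ≤ (x ^ 2 + x + 1) ^ p := fun x hx => by
    calc (x ^ p + 1) ^ 2 ≤ ((x ^ 2 + x + 1) ^ (p / 2)) ^ 2 := by
          gcongr; exact rpow_add_one_le_rpow_half hp hx
      _ = (x ^ 2 + x + 1) ^ p := by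
          rw [← rpow_natCast, ← rpow_mul (by positivity)]; norm_num
  rcases le_or_gt 1 t with h | h
  · exact key t h
  -- the inequality is invariant under `t ↦ t⁻¹` after multiplication by `t ^ (2 * p)`
  calc (t ^ p + 1) ^ 2 = (t ^ p) ^ 2 * (t⁻¹ ^ p + 1) ^ 2 := by
        rw [← mul_pow, mul_add, ← mul_rpow ht.le (by positivity), mul_inv_cancel₀ ht.ne',
          one_rpow, mul_one, add_comm]
    _ ≤ (t ^ p) ^ 2 * (t⁻¹ ^ 2 + t⁻¹ + 1) ^ p := by
        gcongr; exact key t⁻¹ ((one_le_inv₀ ht).2 h.le)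
    _ = (t ^ 2 + t + 1) ^ p := by
        rw [rpow_pow_comm ht.le, ← mul_rpow (by positivity) (by positivity)]
        congr 1
        field_simp
        ring

lemma one_add_rpow_mul_one_add_rpow_le_of_mem_Icc {p b c : ℝ} (hp : 1 < p) (hb : 0 < b)
    (hc : c ∈ Icc 0 b⁻¹) (hend : (1 + b ^ p) * (1 + b⁻¹ ^ p) ≤ (1 + b + b⁻¹) ^ p) :
    (1 + b ^ p) * (1 + c ^ p) ≤ (1 + b + c) ^ p := by
  set ψ : ℝ → ℝ := fun t => (1 + b + t) ^ p - (1 + b ^ p) * (1 + t ^ p)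
  have hderiv : ∀ t ∈ Icc 0 b⁻¹,
      HasDerivAt ψ (p * (1 + b + t) ^ (p - 1) - (1 + b ^ p) * (p * t ^ (p - 1))) t := by
    rintro t ⟨ht, -⟩
    have h1 : HasDerivAt (fun t : ℝ => (1 + b + t) ^ p) (p * (1 + b + t) ^ (p - 1)) t := by
      simpa using
        ((hasDerivAt_id t).const_add (1 + b)).rpow_const (p := p) (Or.inl (by positivity))
    exact h1.sub (((hasDerivAt_rpow_const (Or.inr hp.le)).const_add 1).const_mul _)
  -- `(1 + b ^ p) t ^ (p - 1) = (K t) ^ (p - 1)`, so `ψ'` changes sign where `K t = 1 + b + t`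
  set K := (1 + b ^ p) ^ (p - 1)⁻¹
  have hK : K ^ (p - 1) = 1 + b ^ p := rpow_inv_rpow (by positivity) (by linarith)
  have hK1 : 1 < K :=
    one_lt_rpow (by linarith [rpow_pos_of_pos hb p]) (inv_pos.2 (by linarith))
  have hsign : ∀ t, 0 ≤ t → p * (1 + b + t) ^ (p - 1) - (1 + b ^ p) * (p * t ^ (p - 1)) =
      p * ((1 + b + t) ^ (p - 1) - (K * t) ^ (p - 1)) := by
    intro t ht
    rw [mul_rpow (by positivity) ht, hK]
    ring
  have hψ := min_le_of_hasDerivAt_of_sign (c := (1 + b) / (K - 1)) hc hderiv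
    (fun t ht htc => by
      rw [hsign t ht.1.le]
      rw [lt_div_iff₀ (by linarith)] at htc
      exact mul_nonneg (by linarith)
        (sub_nonneg.2 (rpow_le_rpow (by nlinarith [ht.1]) (by linarith) (by linarith))))
    (fun t ht htc => by
      rw [hsign t ht.1.le]
      rw [div_lt_iff₀ (by linarith)] at htc
      exact mul_nonpos_of_nonneg_of_nonpos (by linarith)
        (sub_nonpos.2 (rpow_le_rpow (by linarith [ht.1]) (by linarith) (by linarith))))
  have hψ0 : 0 ≤ ψ 0 := by
    have := add_rpow_le_rpow_add zero_le_one hb.le hp.le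
    simp only [ψ, zero_rpow (by linarith : p ≠ 0), one_rpow, add_zero, mul_one] at this ⊢
    linarith
  have hψb : 0 ≤ ψ b⁻¹ := sub_nonneg.2 hend
  have := (le_min hψ0 hψb).trans hψ
  simp only [ψ] at this
  linarith

lemma one_add_rpow_mul_one_add_rpow_le {p : ℝ} (hp : (3 : ℝ) ^ (p / 2) = 2) {b c : ℝ}
    (hb : 0 ≤ b) (hc : 0 ≤ c) (hbc : b * c ≤ 1) :
    (1 + b ^ p) * (1 + c ^ p) ≤ (1 + b + c) ^ p := by
  obtain ⟨hp1, -⟩ := mem_Ioo_of_three_rpow_half_eq_two hp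
  rcases hb.eq_or_lt with rfl | hb
  · simpa [zero_rpow (by linarith : p ≠ 0)] using add_rpow_le_rpow_add zero_le_one hc hp1.le
  refine one_add_rpow_mul_one_add_rpow_le_of_mem_Icc hp1 hb
    ⟨hc, by rw [← one_div, le_div_iff₀ hb]; linarith⟩ ?_
  have hbp : 0 < b ^ p := rpow_pos_of_pos hb p
  calc (1 + b ^ p) * (1 + b⁻¹ ^ p) = (b ^ p + 1) ^ 2 / b ^ p := by
        rw [inv_rpow hb.le]; field_simp; ring
    _ ≤ (b ^ 2 + b + 1) ^ p / b ^ p := by gcongr; exact sq_rpow_add_one_le hp hb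
    _ = (1 + b + b⁻¹) ^ p := by
        rw [← div_rpow (by positivity) hb.le]; congr 1; field_simp; ring

lemma rpow_add_rpow_mul_rpow_add_rpow_le {p : ℝ} (hp : (3 : ℝ) ^ (p / 2) = 2) {a b c d : ℝ}
    (ha : 0 ≤ a) (hb : 0 ≤ b) (hc : 0 ≤ c) (hd : 0 ≤ d) (h : b * c ≤ a * d) :
    (a ^ p + b ^ p) * (c ^ p + d ^ p) ≤ (a * c + a * d + b * d) ^ p := by
  obtain ⟨hp1, -⟩ := mem_Ioo_of_three_rpow_half_eq_two hp
  have hp0 : p ≠ 0 := by linarith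
  rcases (mul_nonneg ha hd).eq_or_lt with had | had
  · have hbc : b * c = 0 := le_antisymm (had ▸ h) (mul_nonneg hb hc)
    calc (a ^ p + b ^ p) * (c ^ p + d ^ p)
        = (a * c) ^ p + (b * d) ^ p + (a * d) ^ p + (b * c) ^ p := by
          simp only [mul_rpow ha hc, mul_rpow hb hd, mul_rpow ha hd, mul_rpow hb hc]; ring
      _ ≤ (a * c + b * d) ^ p := by
          rw [← had, hbc, zero_rpow hp0, add_zero, add_zero]
          exact add_rpow_le_rpow_add (by positivity) (by positivity) hp1.le
      _ = (a * c + a * d + b * d) ^ p := by rw [← had, add_zero]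
  have ha0 : 0 < a := lt_of_le_of_ne ha (by rintro rfl; simp at had)
  have hd0 : 0 < d := lt_of_le_of_ne hd (by rintro rfl; simp at had)
  have key := one_add_rpow_mul_one_add_rpow_le hp (div_nonneg hb ha) (div_nonneg hc hd)
    (by rw [div_mul_div_comm, div_le_one had]; exact h)
  have hap : 0 < a ^ p := rpow_pos_of_pos ha0 p
  have hdp : 0 < d ^ p := rpow_pos_of_pos hd0 p
  calc (a ^ p + b ^ p) * (c ^ p + d ^ p)
      = (a * d) ^ p * ((1 + (b / a) ^ p) * (1 + (c / d) ^ p)) := by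
        rw [div_rpow hb ha, div_rpow hc hd, mul_rpow ha hd]; field_simp; ring
    _ ≤ (a * d) ^ p * (1 + b / a + c / d) ^ p := by gcongr
    _ = (a * c + a * d + b * d) ^ p := by
        rw [← mul_rpow had.le (by positivity)]; congr 1; field_simp; ring

lemma rpow_add_rpow_inv_mul_le {p : ℝ} (hp : (3 : ℝ) ^ (p / 2) = 2) {a b c d : ℝ}
    (ha : 0 ≤ a) (hb : 0 ≤ b) (hc : 0 ≤ c) (hd : 0 ≤ d) :
    (a ^ p + b ^ p) ^ p⁻¹ * (c ^ p + d ^ p) ^ p⁻¹ ≤ a * c + max (a * d) (b * c) + b * d := by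
  obtain ⟨hp1, -⟩ := mem_Ioo_of_three_rpow_half_eq_two hp
  have hp0 : 0 < p⁻¹ := inv_pos.2 (by linarith)
  rw [← mul_rpow (by positivity) (by positivity)]
  rcases le_total (b * c) (a * d) with h | h
  · calc ((a ^ p + b ^ p) * (c ^ p + d ^ p)) ^ p⁻¹
        ≤ ((a * c + a * d + b * d) ^ p) ^ p⁻¹ :=
          rpow_le_rpow (by positivity)
            (rpow_add_rpow_mul_rpow_add_rpow_le hp ha hb hc hd h) hp0.le
      _ = a * c + a * d + b * d := rpow_rpow_inv (by positivity) (by linarith)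
      _ ≤ a * c + max (a * d) (b * c) + b * d := by linarith [le_max_left (a * d) (b * c)]
  · calc ((a ^ p + b ^ p) * (c ^ p + d ^ p)) ^ p⁻¹
        = ((b ^ p + a ^ p) * (d ^ p + c ^ p)) ^ p⁻¹ := by ring_nf
      _ ≤ ((b * d + b * c + a * c) ^ p) ^ p⁻¹ :=
          rpow_le_rpow (by positivity)
            (rpow_add_rpow_mul_rpow_add_rpow_le hp hb ha hd hc (by linarith)) hp0.le
      _ = b * d + b * c + a * c := rpow_rpow_inv (by positivity) (by linarith)
      _ ≤ a * c + max (a * d) (b * c) + b * d := by linarith [le_max_right (a * d) (b * c)]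

open Finset
open scoped Pointwise

section SupConvolution

variable {G H : Type*} [AddCommGroup G] [AddCommGroup H]

-- On `Fin d → ℤ` this is `supConv`, definitionally.
noncomputable def supConvolution (f g : G → ℝ) (m : G) : ℝ := ⨆ u, f u * g (m - u)

lemma bddAbove_range_mul_sub {s : Finset G} {f : G → ℝ} (hf : ∀ x ∉ s, f x = 0) (g : G → ℝ)
    (m : G) : BddAbove (range fun u => f u * g (m - u)) := by
  refine ((Finset.finite_toSet (s.image fun u => f u * g (m - u))).insert 0).bddAbove.mono ?_
  rintro _ ⟨u, rfl⟩
  by_cases hu : u ∈ s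
  · exact Or.inr (mem_image_of_mem _ hu)
  · exact Or.inl (by simp [hf u hu])

lemma le_supConvolution {s : Finset G} {f : G → ℝ} (hf : ∀ x ∉ s, f x = 0) (g : G → ℝ)
    (u m : G) : f u * g (m - u) ≤ supConvolution f g m :=
  le_ciSup (bddAbove_range_mul_sub hf g m) u

lemma supConvolution_comp_addEquiv (e : G ≃+ H) (f g : H → ℝ) (m : G) :
    supConvolution (f ∘ e) (g ∘ e) m = supConvolution f g (e m) := by
  simp only [supConvolution, Function.comp_apply, map_sub]
  exact e.toEquiv.iSup_comp (g := fun v => f v * g (e m - v))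

variable [DecidableEq G] [DecidableEq H]

lemma supConvolution_eq_zero {s : Finset G} {f g : G → ℝ} (hf : ∀ x ∉ s, f x = 0)
    (hg : ∀ x ∉ s, g x = 0) {m : G} (hm : m ∉ s + s) : supConvolution f g m = 0 := by
  have h : ∀ u, f u * g (m - u) = 0 := fun u => by
    by_cases hu : u ∈ s
    · have hmu : m - u ∉ s := fun hmu => hm (by simpa using Finset.add_mem_add hu hmu)
      rw [hg (m - u) hmu, mul_zero]
    · rw [hf u hu, zero_mul]
  simp [supConvolution, h]

-- The sums over `G` are written as finite sums over `s` and over `s + s`, which contain the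
-- supports of `f`, `g` and of their sup-convolution.
def PrekopaLeindlerOn (p : ℝ) (s : Finset G) : Prop :=
  ∀ f g : G → ℝ, 0 ≤ f → 0 ≤ g → (∀ x ∉ s, f x = 0) → (∀ x ∉ s, g x = 0) →
    (∑ x ∈ s, f x ^ p) ^ p⁻¹ * (∑ x ∈ s, g x ^ p) ^ p⁻¹ ≤ ∑ m ∈ s + s, supConvolution f g m

variable {p : ℝ}

theorem prekopaLeindlerOn_singleton_zero (hp : p ≠ 0) :
    PrekopaLeindlerOn p ({0} : Finset G) := by
  intro f g hf0 hg0 hf _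
  simp only [sum_singleton, Finset.singleton_add_singleton, add_zero, rpow_rpow_inv (hf0 0) hp,
    rpow_rpow_inv (hg0 0) hp]
  simpa using le_supConvolution hf g 0 0

theorem PrekopaLeindlerOn.image {s : Finset G} (h : PrekopaLeindlerOn p s) (e : G ≃+ H) :
    PrekopaLeindlerOn p (s.image e) := by
  intro f g hf0 hg0 hf hg
  have hcomp : ∀ φ : H → ℝ, (∀ y ∉ s.image e, φ y = 0) → ∀ x ∉ s, (φ ∘ e) x = 0 :=
    fun φ hφ x hx => hφ _ (by simpa using hx)
  have := h (f ∘ e) (g ∘ e) (fun x => hf0 _) (fun x => hg0 _) (hcomp f hf) (hcomp g hg)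
  have hinj (u : Finset G) : Set.InjOn e u := e.injective.injOn
  rw [← Finset.image_add, sum_image (hinj _), sum_image (hinj _), sum_image (hinj _)]
  simpa only [supConvolution_comp_addEquiv, Function.comp_apply] using this

theorem PrekopaLeindlerOn.prod {s : Finset G} {t : Finset H} (hp : p ≠ 0)
    (hs : PrekopaLeindlerOn p s) (ht : PrekopaLeindlerOn p t) :
    PrekopaLeindlerOn p (s ×ˢ t) := by
  intro f g hf0 hg0 hf hg
  let fibreNorm (φ : G × H → ℝ) (a : G) : ℝ := (∑ b ∈ t, φ (a, b) ^ p) ^ p⁻¹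
  have hnorm : ∀ φ : G × H → ℝ, 0 ≤ φ →
      ∑ x ∈ s ×ˢ t, φ x ^ p = ∑ a ∈ s, fibreNorm φ a ^ p := fun φ hφ => by
    rw [sum_product]
    exact sum_congr rfl fun a _ =>
      (rpow_inv_rpow (sum_nonneg fun b _ => rpow_nonneg (hφ _) _) hp).symm
  have hfibre : ∀ φ : G × H → ℝ, (∀ x ∉ s ×ˢ t, φ x = 0) → ∀ a, ∀ b ∉ t, φ (a, b) = 0 :=
    fun φ hφ a b hb => hφ _ fun h => hb (mem_product.1 h).2
  have hbase : ∀ φ : G × H → ℝ, (∀ x ∉ s ×ˢ t, φ x = 0) → ∀ a ∉ s, fibreNorm φ a = 0 :=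
    fun φ hφ a ha => by
      have hzero : ∀ b, φ (a, b) = 0 := fun b => hφ _ fun h => ha (mem_product.1 h).1
      simp [fibreNorm, hzero, zero_rpow hp, zero_rpow (inv_ne_zero hp)]
  have hnn : ∀ φ : G × H → ℝ, 0 ≤ φ → 0 ≤ fibreNorm φ := fun φ hφ a =>
    rpow_nonneg (sum_nonneg fun b _ => rpow_nonneg (hφ _) _) _
  calc (∑ x ∈ s ×ˢ t, f x ^ p) ^ p⁻¹ * (∑ x ∈ s ×ˢ t, g x ^ p) ^ p⁻¹
      = (∑ a ∈ s, fibreNorm f a ^ p) ^ p⁻¹ * (∑ a ∈ s, fibreNorm g a ^ p) ^ p⁻¹ := by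
        rw [hnorm f hf0, hnorm g hg0]
    _ ≤ ∑ m ∈ s + s, supConvolution (fibreNorm f) (fibreNorm g) m :=
        hs _ _ (hnn f hf0) (hnn g hg0) (hbase f hf) (hbase g hg)
    _ ≤ ∑ m ∈ s + s, ∑ n ∈ t + t, supConvolution f g (m, n) := by
        refine sum_le_sum fun m _ => ciSup_le fun u => ?_
        calc fibreNorm f u * fibreNorm g (m - u)
            ≤ ∑ n ∈ t + t, supConvolution (fun b => f (u, b)) (fun b => g (m - u, b)) n :=
              ht _ _ (fun b => hf0 _) (fun b => hg0 _) (hfibre f hf u) (hfibre g hg (m - u))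
          _ ≤ ∑ n ∈ t + t, supConvolution f g (m, n) :=
              sum_le_sum fun n _ => ciSup_le fun v => le_supConvolution hf g (u, v) (m, n)
    _ = ∑ x ∈ s ×ˢ t + s ×ˢ t, supConvolution f g x := by
        rw [product_add_product_comm, sum_product]

end SupConvolution

theorem prekopaLeindlerOn_zero_one {p : ℝ} (hp : (3 : ℝ) ^ (p / 2) = 2) :
    PrekopaLeindlerOn p ({0, 1} : Finset ℤ) := by
  intro f g hf0 hg0 hf hg
  have hsum : ({0, 1} : Finset ℤ) + {0, 1} = {0, 1, 2} := by decide
  rw [sum_pair zero_ne_one, sum_pair zero_ne_one, hsum, sum_insert (by decide),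
    sum_pair (by decide)]
  have h0 := le_supConvolution hf g 0 0
  have h1 := le_supConvolution hf g 0 1
  have h1' := le_supConvolution hf g 1 1
  have h2 := le_supConvolution hf g 1 2
  norm_num at h0 h1 h1' h2
  linarith [rpow_add_rpow_inv_mul_le hp (hf0 0) (hf0 1) (hg0 0) (hg0 1), max_le h1 h1']

def cube (d : ℕ) : Finset (Fin d → ℤ) := Fintype.piFinset fun _ => {0, 1}

lemma mem_cube {d : ℕ} {x : Fin d → ℤ} : x ∈ cube d ↔ InCube x := by
  simp [cube, InCube]

lemma cube_zero : cube 0 = {0} :=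
  eq_singleton_iff_unique_mem.2 ⟨mem_cube.2 finZeroElim, fun _ _ => Subsingleton.elim _ _⟩

lemma cube_succ (d : ℕ) :
    cube (d + 1) = ({0, 1} ×ˢ cube d).image (Fin.consLinearEquiv ℤ fun _ => ℤ).toAddEquiv := by
  ext x
  simp only [Finset.mem_image, Finset.mem_product, mem_cube, Prod.exists]
  constructor
  · intro hx
    exact ⟨x 0, Fin.tail x, ⟨by simpa using hx 0, fun i => hx i.succ⟩, Fin.cons_self_tail x⟩
  · rintro ⟨a, y, ⟨ha, hy⟩, rfl⟩ i
    refine Fin.cases ?_ (fun j => ?_) i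
    · simpa using ha
    · simpa using hy j

theorem prekopaLeindlerOn_cube {p : ℝ} (hp : (3 : ℝ) ^ (p / 2) = 2) :
    ∀ d, PrekopaLeindlerOn p (cube d)
  | 0 => cube_zero ▸ prekopaLeindlerOn_singleton_zero (ne_zero_of_three_rpow_half_eq_two hp)
  | d + 1 => cube_succ d ▸ ((prekopaLeindlerOn_zero_one hp).prod
      (ne_zero_of_three_rpow_half_eq_two hp) (prekopaLeindlerOn_cube hp d)).image _

lemma three_rpow_div_logb : (3 : ℝ) ^ (2 / logb 2 3 / 2) = 2 := by
  rw [div_div_cancel_left' two_ne_zero, inv_logb, rpow_logb (by norm_num) (by norm_num) two_pos]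

theorem prekopa_leindler_hypercube_general (d : ℕ)
    (f g : (Fin d → ℤ) → ℝ) (hf0 : ∀ x, 0 ≤ f x) (hg0 : ∀ x, 0 ≤ g x)
    (hf : SupportedInCube f) (hg : SupportedInCube g) :
    (∑' u : Fin d → ℤ, f u ^ (2 / Real.logb 2 3)) ^ (Real.logb 2 3 / 2) *
        (∑' v : Fin d → ℤ, g v ^ (2 / Real.logb 2 3)) ^ (Real.logb 2 3 / 2) ≤
      ∑' m : Fin d → ℤ, supConv f g m := by
  set p := 2 / logb 2 3
  have hp0 : p ≠ 0 := ne_zero_of_three_rpow_half_eq_two three_rpow_div_logb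
  have hf' : ∀ x ∉ cube d, f x = 0 := fun x hx => hf x (mt mem_cube.2 hx)
  have hg' : ∀ x ∉ cube d, g x = 0 := fun x hx => hg x (mt mem_cube.2 hx)
  rw [← inv_div, tsum_eq_sum (s := cube d) fun x hx => by rw [hf' x hx, zero_rpow hp0],
    tsum_eq_sum (s := cube d) fun x hx => by rw [hg' x hx, zero_rpow hp0],
    tsum_eq_sum (f := supConv f g) (s := cube d + cube d) fun m => supConvolution_eq_zero hf' hg']
  exact prekopaLeindlerOn_cube three_rpow_div_logb d f g hf0 hg0 hf' hg'

theorem prekopa_leindler_hypercube (d : ℕ) (hd : 1 ≤ d)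
    (f g : (Fin d → ℤ) → ℝ) (hf0 : ∀ x, 0 ≤ f x) (hg0 : ∀ x, 0 ≤ g x)
    (hf : SupportedInCube f) (hg : SupportedInCube g) :
    (∑' u : Fin d → ℤ, f u ^ (2 / Real.logb 2 3)) ^ (Real.logb 2 3 / 2) *
        (∑' v : Fin d → ℤ, g v ^ (2 / Real.logb 2 3)) ^ (Real.logb 2 3 / 2) ≤
      ∑' m : Fin d → ℤ, supConv f g m :=
  prekopa_leindler_hypercube_general d f g hf0 hg0 hf hg
end
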